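/- arXiv:2409.04237 — 13 statements merged into one kernel-verified Lean document; each statement's English description precedes it below -/
import Mathlib

section
/- Let X be a normed space, S a dense subset of X, and T : S → S a bijection such that there exists m₀ ∈ ℕ so that for all m ≥ m₀ and all x, y ∈ S, ‖x - y‖ < m iff ‖T x - T y‖ < m. Then for all x, y ∈ S and every k ∈ ℕ, ‖x - y‖ ≤ k iff ‖T x - T y‖ ≤ k. -/
/-!
If `‖x - y‖ > k ≥ ‖T x - T y‖`, go past `x` on the ray from `y` and pick, by density, `z ∈ S` with
`‖z - x‖ < n` and `‖z - y‖ > n + k`, where `n > m₀`. Both distances are compared with integers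
above the threshold, so `‖T z - T x‖ < n` and `‖T z - T y‖ ≥ n + k`, contradicting the triangle
inequality. Applying this to `T` and to `T⁻¹` gives both directions.
-/

open AffineMap

/-- A step-isometry for large distances with threshold `m₀`. -/
def IsLargeStepIsometry {α β : Type*} [PseudoMetricSpace α] [PseudoMetricSpace β] (m₀ : ℕ)
    (f : α → β) : Prop :=
  ∀ m : ℕ, m₀ ≤ m → ∀ x y : α, dist x y < m ↔ dist (f x) (f y) < m

theorem exists_dist_lt_and_add_lt_dist {X : Type*} [NormedAddCommGroup X] [NormedSpace ℝ X]
    {x y : X} {a k : ℝ} (ha : 0 < a) (hk₀ : 0 ≤ k) (hk : k < dist x y) :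
    ∃ p, dist p x < a ∧ a + k < dist p y := by
  set d := dist x y
  have hd : 0 < d := by linarith
  obtain ⟨t, ht, hta⟩ := exists_between (max_lt ha (by linarith) : max 0 (a + k - d) < a)
  rw [max_lt_iff] at ht
  -- the point beyond `x` on the ray from `y` through `x`, at distance `t` from `x`
  refine ⟨lineMap y x (1 + t / d), ?_, ?_⟩
  · rw [dist_lineMap_right, dist_comm, sub_add_cancel_left, norm_neg, Real.norm_eq_abs,
      abs_of_nonneg (div_nonneg ht.1.le hd.le), div_mul_cancel₀ _ hd.ne']
    exact hta
  · rw [dist_lineMap_left, dist_comm, Real.norm_eq_abs,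
      abs_of_nonneg (by linarith [div_nonneg ht.1.le hd.le]), add_mul, one_mul,
      div_mul_cancel₀ _ hd.ne']
    linarith

theorem Dense.exists_mem_dist_lt_and_add_lt_dist {X : Type*} [NormedAddCommGroup X]
    [NormedSpace ℝ X] {S : Set X} (hS : Dense S) {x y : X} {a k : ℝ} (ha : 0 < a)
    (hk₀ : 0 ≤ k) (hk : k < dist x y) : ∃ z ∈ S, dist z x < a ∧ a + k < dist z y := by
  have hU : IsOpen ({p | dist p x < a} ∩ {p | a + k < dist p y}) :=
    (isOpen_lt (continuous_id.dist continuous_const) continuous_const).inter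
      (isOpen_lt continuous_const (continuous_id.dist continuous_const))
  obtain ⟨z, hzU, hzS⟩ := hS.inter_open_nonempty _ hU (exists_dist_lt_and_add_lt_dist ha hk₀ hk)
  exact ⟨z, hzS, hzU⟩

namespace IsLargeStepIsometry

variable {α β : Type*} [PseudoMetricSpace α] [PseudoMetricSpace β] {m₀ : ℕ}

theorem symm {e : α ≃ β} (h : IsLargeStepIsometry m₀ e) : IsLargeStepIsometry m₀ e.symm :=
  fun m hm x y => by simpa using (h m hm (e.symm x) (e.symm y)).symm

theorem dist_le_of_dist_le {X : Type*} [NormedAddCommGroup X] [NormedSpace ℝ X] {S : Set X}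
    (hS : Dense S) {f : S → β} (hf : IsLargeStepIsometry m₀ f) {x y : S} {k : ℕ}
    (hk : dist (f x) (f y) ≤ k) : dist x y ≤ k := by
  by_contra! hxy
  rw [Subtype.dist_eq] at hxy
  obtain ⟨z, hzS, hzx, hzy⟩ :=
    hS.exists_mem_dist_lt_and_add_lt_dist (a := m₀ + 1) (by positivity) k.cast_nonneg hxy
  have hfzx : dist (f ⟨z, hzS⟩) (f x) < m₀ + 1 := by
    exact_mod_cast (hf (m₀ + 1) le_self_add _ _).1 (by simpa [Subtype.dist_eq] using hzx)
  have hfzy : (m₀ + 1 + k : ℕ) ≤ dist (f ⟨z, hzS⟩) (f y) := by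
    rw [← not_lt, ← hf _ (by omega)]
    simpa [Subtype.dist_eq] using hzy.le
  have := dist_triangle (f ⟨z, hzS⟩) (f x) (f y)
  push_cast at hfzy
  linarith

end IsLargeStepIsometry

theorem stmt_0 {X : Type*} [NormedAddCommGroup X] [NormedSpace ℝ X]
    (S : Set X) (hS : Dense S) (T : S → S) (hbij : Function.Bijective T)
    (m₀ : ℕ)
    (hT : ∀ m : ℕ, m₀ ≤ m → ∀ x y : S,
      ‖(x : X) - (y : X)‖ < (m : ℝ) ↔ ‖(T x : X) - (T y : X)‖ < (m : ℝ)) :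
    ∀ x y : S, ∀ k : ℕ,
      ‖(x : X) - (y : X)‖ ≤ (k : ℝ) ↔ ‖(T x : X) - (T y : X)‖ ≤ (k : ℝ) := by
  let e := Equiv.ofBijective T hbij
  have he : IsLargeStepIsometry m₀ e := fun m hm x y => by
    simpa only [Subtype.dist_eq, dist_eq_norm, e, Equiv.ofBijective_apply] using hT m hm x y
  intro x y k
  simp only [← dist_eq_norm, ← Subtype.dist_eq]
  refine ⟨fun h => ?_, he.dist_le_of_dist_le hS⟩
  simpa [e] using he.symm.dist_le_of_dist_le hS (x := T x) (y := T y) (by simpa [e] using h)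
end

section
/- Let X be a real normed vector space and T : X → X a bijection such that for some m₀ ∈ ℕ, for all m ≥ m₀ and all x, y ∈ X, ‖x - y‖ < m iff ‖T x - T y‖ < m. Then T is a step-isometry: for all x, y ∈ X and all k ∈ ℕ, ‖x - y‖ < k iff ‖T x - T y‖ < k (equivalently ⌊‖x - y‖⌋ = ⌊‖T x - T y‖⌋). -/
/-!
For `M ≥ m₀` the map `T` preserves `‖x - y‖ < M + k` for every `k : ℕ`. In a normed space, both
`‖x - y‖ ≤ k` and `‖x - y‖ < k` can be expressed through such strict inequalities with a third
point `z`: `‖x - y‖ ≤ k` iff every `z` with `‖y - z‖ < M` has `‖x - z‖ < M + k`, and (for `k > 0`)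
`‖x - y‖ < k` iff every `z` with `‖x - z‖ ≤ M` has `‖y - z‖ < M + k`; the converse directions use
a point `z` on the line through `x` and `y`, where the triangle inequality is an equality.
Since `T` is surjective, quantifying over `z` is the same as quantifying over `T z`, so `T`
preserves first `≤ k` and then `< k`.
-/

section NormedSpace

variable {X : Type*} [NormedAddCommGroup X] [NormedSpace ℝ X]

lemma exists_norm_sub_eq_norm_sub_add {x y : X} (hxy : x ≠ y) {t : ℝ} (ht : 0 ≤ t) :
    ∃ z : X, ‖y - z‖ = t ∧ ‖x - z‖ = ‖x - y‖ + t := by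
  have hd : 0 < ‖x - y‖ := norm_pos_iff.mpr (sub_ne_zero.mpr hxy)
  set s := t / ‖x - y‖
  have hs : 0 ≤ s := by positivity
  refine ⟨y - s • (x - y), ?_, ?_⟩
  · rw [sub_sub_cancel, norm_smul, Real.norm_of_nonneg hs, div_mul_cancel₀ _ hd.ne']
  · rw [show x - (y - s • (x - y)) = (1 + s) • (x - y) by rw [add_smul, one_smul]; abel,
      norm_smul, Real.norm_of_nonneg (by positivity), add_mul, one_mul, div_mul_cancel₀ _ hd.ne']

lemma norm_sub_le_iff_forall_norm_sub_lt {m k : ℝ} (hm : 0 < m) (hk : 0 ≤ k) (x y : X) :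
    ‖x - y‖ ≤ k ↔ ∀ z : X, ‖y - z‖ < m → ‖x - z‖ < m + k := by
  refine ⟨fun h z hz => by linarith [norm_sub_le_norm_sub_add_norm_sub x y z], fun h => ?_⟩
  by_contra! hlt
  have hxy : x ≠ y := fun hxy => by simp [hxy] at hlt; linarith
  -- push `z` beyond `y`, away from `x`, by some `t < m` with `‖x - y‖ + t ≥ m + k`
  obtain ⟨z, hyz, hxz⟩ := exists_norm_sub_eq_norm_sub_add hxy
    (le_max_left 0 ((m + k - ‖x - y‖ + m) / 2))
  have := h z (by rw [hyz]; exact max_lt hm (by linarith))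
  rw [hxz] at this
  linarith [le_max_right 0 ((m + k - ‖x - y‖ + m) / 2)]

lemma norm_sub_lt_iff_forall_norm_sub_le {m k : ℝ} (hm : 0 ≤ m) (hk : 0 < k) (x y : X) :
    ‖x - y‖ < k ↔ ∀ z : X, ‖x - z‖ ≤ m → ‖y - z‖ < m + k := by
  refine ⟨fun h z hz => ?_, fun h => ?_⟩
  · linarith [norm_sub_le_norm_sub_add_norm_sub y x z, norm_sub_rev y x]
  by_contra! hle
  have hxy : y ≠ x := fun hxy => by simp [hxy] at hle; linarith
  obtain ⟨z, hxz, hyz⟩ := exists_norm_sub_eq_norm_sub_add hxy hm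
  have := h z hxz.le
  rw [hyz, norm_sub_rev] at this
  linarith

end NormedSpace

lemma Function.Surjective.forall_imp_iff_of_iff {α : Type*} {T : α → α}
    (hT : Function.Surjective T) {R S : α → α → Prop}
    (hR : ∀ a b, R a b ↔ R (T a) (T b)) (hS : ∀ a b, S a b ↔ S (T a) (T b)) (a b : α) :
    (∀ z, R a z → S b z) ↔ ∀ z, R (T a) z → S (T b) z := by
  conv_rhs => rw [hT.forall]
  exact forall_congr' fun z => imp_congr (hR a z) (hS b z)

theorem stmt_1 {X : Type*} [NormedAddCommGroup X] [NormedSpace ℝ X]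
    (T : X → X) (hbij : Function.Bijective T)
    (m₀ : ℕ)
    (hT : ∀ m : ℕ, m₀ ≤ m → ∀ x y : X,
      ‖x - y‖ < (m : ℝ) ↔ ‖T x - T y‖ < (m : ℝ)) :
    ∀ x y : X, ∀ k : ℕ, ‖x - y‖ < (k : ℝ) ↔ ‖T x - T y‖ < (k : ℝ) := by
  set M : ℕ := m₀ + 1
  have hM : (0 : ℝ) < M := by positivity
  have hT_add : ∀ k : ℕ, ∀ x y : X,
      ‖x - y‖ < (M : ℝ) + k ↔ ‖T x - T y‖ < (M : ℝ) + k := fun k => by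
    exact_mod_cast hT (M + k) (by omega)
  have hT_le : ∀ k : ℕ, ∀ x y : X, ‖x - y‖ ≤ (k : ℝ) ↔ ‖T x - T y‖ ≤ (k : ℝ) := by
    intro k x y
    simp only [norm_sub_le_iff_forall_norm_sub_lt hM k.cast_nonneg]
    exact hbij.surjective.forall_imp_iff_of_iff (R := fun a z => ‖a - z‖ < M)
      (S := fun a z => ‖a - z‖ < M + k) (hT M (by omega)) (hT_add k) y x
  intro x y k
  rcases k.eq_zero_or_pos with rfl | hk
  · simp [not_lt.mpr (norm_nonneg _)]
  · simp only [norm_sub_lt_iff_forall_norm_sub_le hM.le (Nat.cast_pos.mpr hk)]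
    exact hbij.surjective.forall_imp_iff_of_iff (R := fun a z => ‖a - z‖ ≤ M)
      (S := fun a z => ‖a - z‖ < M + k) (hT_le M) (hT_add k) x y
end

section
/- Let X be a normed space, S a dense subset, and T : S → S a bijective step-isometry for large distances such that T and T⁻¹ are both continuous (in the subspace topology). Then T is a step-isometry: for all x, y ∈ S and all k ∈ ℕ, ‖x - y‖ < k iff ‖T x - T y‖ < k. -/
/-!
Far from the diagonal the thresholds `m ≥ m₀` can be chained. If `‖x - y‖ < k` but
`‖T x - T y‖ > k`, a point `z ∈ S` near the ray from `T y` through `T x`, beyond `T x`, lies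
within `m₀ + 1` of `T x` but farther than `m₀ + 1 + k` from `T y`; its preimage `w` then has
`‖w - x‖ < m₀ + 1` and `‖w - y‖ ≥ m₀ + 1 + k`, contradicting the triangle inequality. So
`‖T x - T y‖ ≤ k`. Equality is excluded by continuity of `T⁻¹`: points of `S` just beyond `T y`
on the same ray are farther than `k` from `T x`, yet are images of points within `k` of `x`.
-/

open Function Metric

section

variable {X Y : Type*} [NormedAddCommGroup X] [NormedAddCommGroup Y]

lemma exists_norm_sub_eq_and_norm_sub_eq_add [NormedSpace ℝ Y] {a b : Y} (hab : a ≠ b)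
    {r : ℝ} (hr : 0 ≤ r) :
    ∃ p : Y, ‖p - a‖ = r ∧ ‖p - b‖ = r + ‖a - b‖ := by
  have hd : ‖a - b‖ ≠ 0 := norm_ne_zero_iff.mpr (sub_ne_zero.mpr hab)
  refine ⟨a + (r / ‖a - b‖) • (a - b), ?_, ?_⟩
  · rw [add_sub_cancel_left, norm_smul, Real.norm_of_nonneg (by positivity),
      div_mul_cancel₀ _ hd]
  · rw [show a + (r / ‖a - b‖) • (a - b) - b = (r / ‖a - b‖ + 1) • (a - b) by
        rw [add_smul, one_smul]; abel,
      norm_smul, Real.norm_of_nonneg (by positivity), add_mul, div_mul_cancel₀ _ hd, one_mul]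

lemma Dense.exists_mem_norm_sub_lt_and_lt [NormedSpace ℝ Y] {U : Set Y} (hU : Dense U)
    {a b : Y} (hab : a ≠ b) {r ε : ℝ} (hr : 0 < r) (hε : 0 < ε) :
    ∃ z ∈ U, ‖z - a‖ < r ∧ r + ‖a - b‖ < ‖z - b‖ + ε := by
  set δ := min r ε / 2
  have hδ : 0 < δ := by positivity
  have hδr : δ ≤ r / 2 := by simp only [δ]; linarith [min_le_left r ε]
  have hδε : δ ≤ ε / 2 := by simp only [δ]; linarith [min_le_right r ε]
  obtain ⟨p, hpa, hpb⟩ := exists_norm_sub_eq_and_norm_sub_eq_add hab (r := r - δ) (by linarith)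
  obtain ⟨z, hzp, hzU⟩ := Metric.dense_iff.mp hU p δ hδ
  rw [mem_ball, dist_eq_norm] at hzp
  refine ⟨z, hzU, ?_, ?_⟩
  · calc ‖z - a‖ ≤ ‖z - p‖ + ‖p - a‖ := norm_sub_le_norm_sub_add_norm_sub _ _ _
      _ < r := by linarith
  · have hpzb : ‖p - b‖ ≤ ‖z - p‖ + ‖z - b‖ := by
      rw [norm_sub_rev z p]; exact norm_sub_le_norm_sub_add_norm_sub _ _ _
    linarith

def IsStepIsometryFrom (m₀ : ℕ) {S : Set X} {U : Set Y} (T : S → U) : Prop :=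
  ∀ m : ℕ, m₀ ≤ m → ∀ x y : S,
    ‖(x : X) - (y : X)‖ < (m : ℝ) ↔ ‖(T x : Y) - (T y : Y)‖ < (m : ℝ)

namespace IsStepIsometryFrom

variable {m₀ : ℕ} {S : Set X} {U : Set Y}

lemma symm {e : S ≃ U} (he : IsStepIsometryFrom m₀ e) : IsStepIsometryFrom m₀ e.symm :=
  fun m hm a b => by simpa using (he m hm (e.symm a) (e.symm b)).symm

lemma norm_sub_le [NormedSpace ℝ Y] {T : S → U} (hT : IsStepIsometryFrom m₀ T) (hU : Dense U)
    (hsurj : Surjective T) {k : ℕ} {x y : S} (h : ‖(x : X) - y‖ < k) :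
    ‖(T x : Y) - T y‖ ≤ k := by
  by_contra! hlt
  have hne : (T x : Y) ≠ T y := fun heq => by
    rw [heq, sub_self, norm_zero] at hlt; linarith [k.cast_nonneg (α := ℝ)]
  obtain ⟨z, hzU, hzx, hzy⟩ := hU.exists_mem_norm_sub_lt_and_lt hne
    (r := m₀ + 1) (ε := ‖(T x : Y) - T y‖ - k) (by positivity) (by linarith)
  obtain ⟨w, hw⟩ := hsurj ⟨z, hzU⟩
  have hwx : ‖(w : X) - x‖ < m₀ + 1 := by
    have := (hT (m₀ + 1) (by omega) w x).mpr
    push_cast at this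
    exact this (by rw [hw]; exact hzx)
  have hwy : ‖(w : X) - y‖ < m₀ + 1 + k :=
    calc ‖(w : X) - y‖ ≤ ‖(w : X) - x‖ + ‖(x : X) - y‖ := norm_sub_le_norm_sub_add_norm_sub _ _ _
      _ < m₀ + 1 + k := by linarith
  have := (hT (m₀ + 1 + k) (by omega) w y).mp (by push_cast; exact hwy)
  rw [hw] at this
  push_cast at this
  linarith

lemma norm_sub_lt [NormedSpace ℝ Y] {e : S ≃ U} (he : IsStepIsometryFrom m₀ e) (hU : Dense U)
    (hcont : Continuous e.symm) {k : ℕ} {x y : S} (h : ‖(x : X) - y‖ < k) :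
    ‖(e x : Y) - e y‖ < k := by
  refine (he.norm_sub_le hU e.surjective h).lt_of_ne fun heq => ?_
  have hopen : IsOpen {u : U | ‖(x : X) - e.symm u‖ < k} :=
    isOpen_lt (by fun_prop) continuous_const
  obtain ⟨δ, hδ, hball⟩ := Metric.isOpen_iff.mp hopen (e y) (by simpa using h)
  have hne : (e y : Y) ≠ e x := fun h' => by
    rw [h', sub_self, norm_zero] at heq
    linarith [norm_nonneg ((x : X) - y)]
  obtain ⟨z, hzU, hzy, hzx⟩ := hU.exists_mem_norm_sub_lt_and_lt hne hδ hδ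
  have hz : (⟨z, hzU⟩ : U) ∈ ball (e y) δ := by rwa [mem_ball, Subtype.dist_eq, dist_eq_norm]
  have hle := he.norm_sub_le hU e.surjective (hball hz)
  rw [Equiv.apply_symm_apply, norm_sub_rev] at hle
  rw [norm_sub_rev, heq] at hzx
  linarith

end IsStepIsometryFrom

end

theorem stmt_2 {X : Type*} [NormedAddCommGroup X] [NormedSpace ℝ X]
    (S : Set X) (hS : Dense S) (T T' : S → S)
    (hinv₁ : Function.LeftInverse T' T) (hinv₂ : Function.RightInverse T' T)
    (m₀ : ℕ)
    (hT : ∀ m : ℕ, m₀ ≤ m → ∀ x y : S,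
      ‖(x : X) - (y : X)‖ < (m : ℝ) ↔ ‖(T x : X) - (T y : X)‖ < (m : ℝ))
    (hTc : Continuous T) (hT'c : Continuous T') :
    ∀ x y : S, ∀ k : ℕ,
      ‖(x : X) - (y : X)‖ < (k : ℝ) ↔ ‖(T x : X) - (T y : X)‖ < (k : ℝ) := by
  let e : S ≃ S := ⟨T, T', hinv₁, hinv₂⟩
  have he : IsStepIsometryFrom m₀ e := hT
  intro x y k
  refine ⟨he.norm_sub_lt hS hT'c, fun h => ?_⟩
  simpa [e, hinv₁ x, hinv₁ y] using he.symm.norm_sub_lt hS (e := e.symm) hTc h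
end

section
/- If T is a step-isometry on a dense subset S of a normed space X (i.e., ⌊‖x-y‖⌋ = ⌊‖Tx-Ty‖⌋ for all x,y ∈ S), then T preserves integer distances: for all x, y ∈ S and k ∈ ℕ, ‖x - y‖ = k iff ‖T x - T y‖ = k. -/
/-!
For `k ∈ ℕ` and `x, y` in a dense subset `S` of a real normed space, `‖x - y‖ ≤ k` holds exactly
when every `w ∈ S` with `‖w - y‖ < 1` satisfies `‖w - x‖ < k + 1`: if `‖x - y‖ > k`, a point of
`S` close to the ray from `x` through `y`, just inside the unit ball around `y`, violates this.
Both conditions only involve floors of distances between points of `S`, so a surjection preserving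
those floors preserves `‖x - y‖ ≤ k`; it preserves `k ≤ ‖x - y‖` since that says `k ≤ ⌊‖x - y‖⌋`.
-/

open Metric

theorem exists_dist_eq_and_dist_eq_add {X : Type*} [NormedAddCommGroup X] [NormedSpace ℝ X]
    {x y : X} (hxy : x ≠ y) {t : ℝ} (ht : 0 ≤ t) :
    ∃ q, dist q y = t ∧ dist q x = dist x y + t := by
  have hd : 0 < dist x y := dist_pos.2 hxy
  refine ⟨AffineMap.lineMap x y (1 + t / dist x y), ?_, ?_⟩
  · rw [dist_lineMap_right, sub_add_cancel_left, norm_neg, Real.norm_of_nonneg (by positivity),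
      div_mul_cancel₀ _ hd.ne']
  · rw [dist_lineMap_left, Real.norm_of_nonneg (by positivity), add_mul, one_mul,
      div_mul_cancel₀ _ hd.ne']

section DenseSubset

variable {X : Type*} [NormedAddCommGroup X] [NormedSpace ℝ X] {S : Set X}

theorem Dense.dist_le_iff_ball_inter_subset_ball (hS : Dense S) {x y : X} {r ε : ℝ}
    (hr : 0 ≤ r) (hε : 0 < ε) : dist x y ≤ r ↔ ball y ε ∩ S ⊆ ball x (r + ε) := by
  refine ⟨fun h => Set.inter_subset_left.trans (ball_subset_ball' ?_), fun h => ?_⟩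
  · rw [dist_comm]; linarith
  by_contra! hlt
  obtain ⟨δ, hδ, hδε, hδr⟩ : ∃ δ, 0 < δ ∧ δ < ε ∧ δ < dist x y - r := by
    obtain ⟨δ, hδ, hδm⟩ := _root_.exists_between (lt_min hε (sub_pos.2 hlt))
    exact ⟨δ, hδ, lt_min_iff.1 hδm⟩
  obtain ⟨q, hqy, hqx⟩ := exists_dist_eq_and_dist_eq_add (dist_pos.1 (hr.trans_lt hlt))
    (sub_nonneg.2 hδε.le)
  obtain ⟨w, ⟨hwy, hwx⟩, hwS⟩ := hS.inter_open_nonempty (ball y ε ∩ (closedBall x (r + ε))ᶜ)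
    (isOpen_ball.inter isClosed_closedBall.isOpen_compl)
    ⟨q, mem_ball.2 (by linarith), fun hq => by linarith [mem_closedBall.1 hq]⟩
  exact hwx (ball_subset_closedBall (h ⟨hwy, hwS⟩))

theorem Dense.norm_sub_le_natCast_iff_forall_floor (hS : Dense S) (x y : X) (k : ℕ) :
    ‖x - y‖ ≤ k ↔ ∀ w : S, ⌊‖(w : X) - y‖⌋ < 1 → ⌊‖(w : X) - x‖⌋ < k + 1 := by
  rw [← dist_eq_norm, hS.dist_le_iff_ball_inter_subset_ball k.cast_nonneg one_pos]
  simp only [Int.floor_lt, Set.subset_def, Set.mem_inter_iff, mem_ball, dist_eq_norm,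
    Subtype.forall, and_imp]
  push_cast
  exact forall_congr' fun w => forall_comm

end DenseSubset

theorem norm_sub_le_natCast_iff_of_floor_norm_sub_eq {X Y : Type*}
    [NormedAddCommGroup X] [NormedSpace ℝ X] [NormedAddCommGroup Y] [NormedSpace ℝ Y]
    {S : Set X} {S' : Set Y} (hS : Dense S) (hS' : Dense S') {T : S → S'}
    (hT : Function.Surjective T) (hfloor : ∀ x y : S, ⌊‖(x : X) - y‖⌋ = ⌊‖(T x : Y) - T y‖⌋)
    (x y : S) (k : ℕ) : ‖(x : X) - y‖ ≤ k ↔ ‖(T x : Y) - T y‖ ≤ k := by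
  rw [hS.norm_sub_le_natCast_iff_forall_floor, hS'.norm_sub_le_natCast_iff_forall_floor,
    hT.forall]
  simp only [hfloor]

theorem stmt_3 {X : Type*} [NormedAddCommGroup X] [NormedSpace ℝ X]
    (S : Set X) (hS : Dense S) (T : S → S) (hbij : Function.Bijective T)
    (hT : ∀ x y : S, ⌊‖(x : X) - (y : X)‖⌋ = ⌊‖(T x : X) - (T y : X)‖⌋) :
    ∀ x y : S, ∀ k : ℕ,
      ‖(x : X) - (y : X)‖ = (k : ℝ) ↔ ‖(T x : X) - (T y : X)‖ = (k : ℝ) := by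
  intro x y k
  have hge : (k : ℝ) ≤ ‖(x : X) - y‖ ↔ (k : ℝ) ≤ ‖(T x : X) - T y‖ := by
    rw [← Int.cast_natCast, ← Int.le_floor, ← Int.le_floor, hT]
  rw [le_antisymm_iff, le_antisymm_iff, hge,
    norm_sub_le_natCast_iff_of_floor_norm_sub_eq hS hS hbij.surjective hT]
end

section
/- For each n ≥ 1, define g_n : [0,1] → [0,1] to be the piecewise linear function with g_n(0)=0, g_n(1/(n+1)) = 1 - 1/(n+1), g_n(1)=1, and define h_n : ℝ → ℝ by h_n(x) = ⌊x⌋ + g_n(x - ⌊x⌋). Then each h_n is a step-isometry on ℝ: for all x, y ∈ ℝ, ⌊|x - y|⌋ = ⌊|h_n(x) - h_n(y)|⌋. -/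
/-!
Write `x = ⌊x⌋ + fract x`. Since `h_n` keeps the integer part and replaces the fractional part
by `g_n (fract x)`, the difference `h_n x - h_n y` has integer part `⌊x⌋ - ⌊y⌋` plus `0` or `-1`,
according as the fractional parts satisfy `fract y ≤ fract x` or not; as `g_n` is a strictly
increasing self-map of `[0, 1)`, that comparison is the same before and after applying `g_n`.
So `⌊h_n x - h_n y⌋ = ⌊x - y⌋`, and then also `⌊|h_n x - h_n y|⌋ = ⌊|x - y|⌋`, because both
differences have the sign of their floors.
-/

/-- The piecewise linear bijection of `[0,1]` with `g n 0 = 0`,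
`g n (1/(n+1)) = 1 - 1/(n+1)` and `g n 1 = 1`. -/
noncomputable def gFn (n : ℕ) (t : ℝ) : ℝ :=
  if t ≤ 1 / (n + 1) then n * t else 1 - (1 - t) / n

/-- The step-isometry of `ℝ` obtained from `gFn` via integer parts. -/
noncomputable def hFn (n : ℕ) (x : ℝ) : ℝ :=
  ⌊x⌋ + gFn n (x - ⌊x⌋)

open Set

section FloorRing

variable {α : Type*} [CommRing α] [LinearOrder α] [IsStrictOrderedRing α] [FloorRing α]

theorem floor_sub_of_mem_Ico {a b : α} (ha : a ∈ Ico (0 : α) 1) (hb : b ∈ Ico (0 : α) 1) :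
    ⌊a - b⌋ = if b ≤ a then 0 else -1 := by
  obtain ⟨ha0, ha1⟩ := ha
  obtain ⟨hb0, hb1⟩ := hb
  split_ifs with hba
  · exact Int.floor_eq_zero_iff.2 ⟨by linarith, by linarith⟩
  · rw [Int.floor_eq_iff]
    push_cast
    constructor <;> linarith

theorem floor_sub_floor_add_map_fract {g : α → α} (hg : StrictMonoOn g (Ico 0 1))
    (hmaps : MapsTo g (Ico 0 1) (Ico 0 1)) (x y : α) :
    ⌊(⌊x⌋ + g (Int.fract x)) - (⌊y⌋ + g (Int.fract y))⌋ = ⌊x - y⌋ := by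
  have hx : Int.fract x ∈ Ico (0 : α) 1 := ⟨Int.fract_nonneg x, Int.fract_lt_one x⟩
  have hy : Int.fract y ∈ Ico (0 : α) 1 := ⟨Int.fract_nonneg y, Int.fract_lt_one y⟩
  calc ⌊(⌊x⌋ + g (Int.fract x)) - (⌊y⌋ + g (Int.fract y))⌋
      = ⌊(((⌊x⌋ - ⌊y⌋ : ℤ) : α) + (g (Int.fract x) - g (Int.fract y)))⌋ := by
        push_cast; ring_nf
    _ = (⌊x⌋ - ⌊y⌋) + ⌊Int.fract x - Int.fract y⌋ := by
        rw [Int.floor_intCast_add, floor_sub_of_mem_Ico (hmaps hx) (hmaps hy),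
          floor_sub_of_mem_Ico hx hy]
        simp only [hg.le_iff_le hy hx]
    _ = ⌊x - y⌋ := by
        rw [← Int.floor_intCast_add]
        congr 1
        simp only [Int.fract]
        push_cast
        ring

theorem floor_abs_sub_eq_of_floor_sub_eq {f : α → α} (hf : ∀ x y, ⌊f x - f y⌋ = ⌊x - y⌋)
    (x y : α) : ⌊|f x - f y|⌋ = ⌊|x - y|⌋ := by
  wlog hyx : y ≤ x generalizing x y
  · rw [abs_sub_comm, abs_sub_comm x]
    exact this y x (le_of_not_ge hyx)
  have hfyx : 0 ≤ f x - f y := by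
    rw [← Int.floor_nonneg, hf]
    exact Int.floor_nonneg.2 (sub_nonneg.2 hyx)
  rw [abs_of_nonneg hfyx, abs_of_nonneg (sub_nonneg.2 hyx), hf]

end FloorRing

section PiecewiseLinear

variable {n : ℕ}

theorem gFn_eq_min (hn : 1 ≤ n) (t : ℝ) : gFn n t = min (n * t) (1 - (1 - t) / n) := by
  have hn' : (1 : ℝ) ≤ n := by exact_mod_cast hn
  have hn0 : (0 : ℝ) < n := by linarith
  -- The two linear pieces cross at the breakpoint `1 / (n + 1)`, and the steeper one is on the left.
  have hsign : n * t - (1 - (1 - t) / n) = (n - 1) * ((n + 1) * t - 1) / n := by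
    field_simp
    ring
  unfold gFn
  split_ifs with ht
  · rw [le_div_iff₀ (by linarith), mul_comm] at ht
    have : (n - 1) * ((n + 1) * t - 1) / n ≤ 0 :=
      div_nonpos_of_nonpos_of_nonneg (mul_nonpos_of_nonneg_of_nonpos (by linarith) (by linarith))
        hn0.le
    rw [min_eq_left (by linarith)]
  · rw [not_le, div_lt_iff₀ (by linarith), mul_comm] at ht
    have : 0 ≤ (n - 1) * ((n + 1) * t - 1) / n :=
      div_nonneg (mul_nonneg (by linarith) (by linarith)) hn0.le
    rw [min_eq_right (by linarith)]

theorem gFn_strictMono (hn : 1 ≤ n) : StrictMono (gFn n) := by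
  have hn0 : (0 : ℝ) < n := by exact_mod_cast hn
  intro s t hst
  simp only [gFn_eq_min hn]
  have hleft : n * s < n * t := mul_lt_mul_of_pos_left hst hn0
  have hright : 1 - (1 - s) / n < 1 - (1 - t) / n := by
    have := div_lt_div_of_pos_right (a := 1 - t) (b := 1 - s) (by linarith) hn0
    linarith
  exact lt_min ((min_le_left _ _).trans_lt hleft) ((min_le_right _ _).trans_lt hright)

theorem gFn_zero : gFn n 0 = 0 := by
  rw [gFn, if_pos (by positivity), mul_zero]

theorem gFn_one (hn : 1 ≤ n) : gFn n 1 = 1 := by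
  have hn' : (1 : ℝ) ≤ n := by exact_mod_cast hn
  have : ¬ (1 : ℝ) ≤ 1 / (n + 1) := by
    rw [le_div_iff₀ (by linarith)]
    linarith
  rw [gFn, if_neg this, sub_self, zero_div, sub_zero]

theorem gFn_mapsTo_Ico (hn : 1 ≤ n) : MapsTo (gFn n) (Ico 0 1) (Ico 0 1) := fun _ ⟨h0, h1⟩ =>
  ⟨gFn_zero (n := n) ▸ (gFn_strictMono hn).monotone h0, gFn_one hn ▸ gFn_strictMono hn h1⟩

theorem floor_hFn_sub (hn : 1 ≤ n) (x y : ℝ) : ⌊hFn n x - hFn n y⌋ = ⌊x - y⌋ :=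
  floor_sub_floor_add_map_fract ((gFn_strictMono hn).strictMonoOn _) (gFn_mapsTo_Ico hn) x y

end PiecewiseLinear

theorem stmt_4 (n : ℕ) (hn : 1 ≤ n) :
    ∀ x y : ℝ, ⌊|x - y|⌋ = ⌊|hFn n x - hFn n y|⌋ := fun x y =>
  (floor_abs_sub_eq_of_floor_sub_eq (floor_hFn_sub hn) x y).symm
end

section
/- Let X be a normed space whose closed unit ball has a strongly extreme point x. Then for every ε > 0 there exist two open unit balls whose intersection is nonempty and has diameter at most ε. Consequently, the open unit balls (all translates of the open unit ball) form a subbase for the norm topology on X. -/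
/-!
Scaling the strongly extreme point `x` down to `c = x / (1 + δ)` gives a point of the open unit
ball such that `z ∈ ball c 1 ∩ ball (-c) 1` means `‖x ± (1 + δ) z‖ < 1 + δ`; strong extremality
then forces `z` to be small. Translating, every point `p` lies in an intersection of two open unit
balls contained in a prescribed small ball around `p`, so these balls form a subbase.
-/

open Metric

theorem TopologicalSpace.generateFrom_eq_of_inter_subset_ball {α : Type*} [PseudoMetricSpace α]
    {S : Set (Set α)} (hS : ∀ s ∈ S, IsOpen s)
    (h : ∀ p : α, ∀ ε > 0, ∃ s ∈ S, ∃ t ∈ S, p ∈ s ∩ t ∧ s ∩ t ⊆ ball p ε) :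
    TopologicalSpace.generateFrom S = (inferInstance : TopologicalSpace α) := by
  refine le_antisymm (le_of_nhds_le_nhds fun p => ?_) (le_generateFrom hS)
  refine nhds_basis_ball.ge_iff.mpr fun ε hε => ?_
  obtain ⟨s, hs, t, ht, ⟨hps, hpt⟩, hst⟩ := h p ε hε
  refine Filter.mem_of_superset (Filter.inter_mem ?_ ?_) hst
  · exact @IsOpen.mem_nhds _ (generateFrom S) _ _ (isOpen_generateFrom_of_mem hs) hps
  · exact @IsOpen.mem_nhds _ (generateFrom S) _ _ (isOpen_generateFrom_of_mem ht) hpt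

section StronglyExtreme

variable {X : Type*} [NormedAddCommGroup X] [NormedSpace ℝ X]

/-- Strong extremality in the closed unit ball, without the condition `‖x‖ ≤ 1`. -/
def IsStronglyExtremePoint (x : X) : Prop :=
  ∀ ε > (0 : ℝ), ∃ δ > (0 : ℝ), ∀ y : X, ‖x + y‖ < 1 + δ → ‖x - y‖ < 1 + δ → ‖y‖ < ε

theorem IsStronglyExtremePoint.exists_ball_inter_ball_neg_subset {x : X}
    (hse : IsStronglyExtremePoint x) (hx : ‖x‖ ≤ 1) {ε : ℝ} (hε : 0 < ε) :
    ∃ c : X, ‖c‖ < 1 ∧ ball c 1 ∩ ball (-c) 1 ⊆ ball 0 ε := by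
  obtain ⟨δ, hδ, hsmall⟩ := hse ε hε
  have hpos : (0 : ℝ) < 1 + δ := by linarith
  have norm_scale (v : X) : ‖(1 + δ) • v‖ = (1 + δ) * ‖v‖ := by
    rw [norm_smul, Real.norm_of_nonneg hpos.le]
  have hx' : (1 + δ) • (1 + δ)⁻¹ • x = x := smul_inv_smul₀ hpos.ne' x
  refine ⟨(1 + δ)⁻¹ • x, ?_, ?_⟩
  · rw [norm_smul, Real.norm_of_nonneg (inv_nonneg.mpr hpos.le), inv_mul_lt_iff₀ hpos]
    linarith
  · rintro z ⟨hz₁, hz₂⟩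
    rw [mem_ball, dist_eq_norm] at hz₁ hz₂
    rw [sub_neg_eq_add] at hz₂
    have hsum : ‖x + (1 + δ) • z‖ < 1 + δ := by
      rw [← hx', ← smul_add, norm_scale, add_comm _ z]
      exact mul_lt_of_lt_one_right hpos hz₂
    have hdiff : ‖x - (1 + δ) • z‖ < 1 + δ := by
      rw [← hx', ← smul_sub, norm_scale, norm_sub_rev]
      exact mul_lt_of_lt_one_right hpos hz₁
    have hy := hsmall _ hsum hdiff
    rw [norm_scale] at hy
    rw [mem_ball_zero_iff]
    exact (le_mul_of_one_le_left (norm_nonneg z) (by linarith)).trans_lt hy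

theorem IsStronglyExtremePoint.exists_ball_inter_ball_subset {x : X}
    (hse : IsStronglyExtremePoint x) (hx : ‖x‖ ≤ 1) (p : X) {ε : ℝ} (hε : 0 < ε) :
    ∃ c₁ c₂ : X, p ∈ ball c₁ 1 ∩ ball c₂ 1 ∧ ball c₁ 1 ∩ ball c₂ 1 ⊆ ball p ε := by
  obtain ⟨c, hc, hsub⟩ := hse.exists_ball_inter_ball_neg_subset hx hε
  refine ⟨p + c, p - c, ⟨?_, ?_⟩, fun z ⟨hz₁, hz₂⟩ => ?_⟩
  · simpa [dist_eq_norm] using hc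
  · simpa [dist_eq_norm] using hc
  · have := hsub (a := z - p) ⟨by simpa [dist_eq_norm, sub_sub] using hz₁,
      by simpa [dist_eq_norm, sub_add] using hz₂⟩
    simpa [dist_eq_norm] using this

end StronglyExtreme

theorem stmt_5 {X : Type*} [NormedAddCommGroup X] [NormedSpace ℝ X]
    (x : X) (hx : ‖x‖ ≤ 1)
    (hse : ∀ ε > (0 : ℝ), ∃ δ > (0 : ℝ), ∀ y : X,
      ‖x + y‖ < 1 + δ → ‖x - y‖ < 1 + δ → ‖y‖ < ε) :
    (∀ ε > (0 : ℝ), ∃ c₁ c₂ : X,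
      (Metric.ball c₁ 1 ∩ Metric.ball c₂ 1).Nonempty ∧
      Metric.diam (Metric.ball c₁ 1 ∩ Metric.ball c₂ 1) ≤ ε) ∧
    TopologicalSpace.generateFrom {U : Set X | ∃ c : X, U = Metric.ball c 1} =
      (inferInstance : TopologicalSpace X) := by
  have hse : IsStronglyExtremePoint x := hse
  constructor
  · intro ε hε
    obtain ⟨c₁, c₂, hmem, hsub⟩ := hse.exists_ball_inter_ball_subset hx 0 (half_pos hε)
    refine ⟨c₁, c₂, ⟨0, hmem⟩, ?_⟩
    calc diam (ball c₁ 1 ∩ ball c₂ 1) ≤ diam (ball (0 : X) (ε / 2)) :=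
          diam_mono hsub isBounded_ball
      _ ≤ 2 * (ε / 2) := diam_ball (half_pos hε).le
      _ = ε := by ring
  · refine TopologicalSpace.generateFrom_eq_of_inter_subset_ball ?_ fun p ε hε => ?_
    · rintro _ ⟨c, rfl⟩
      exact isOpen_ball
    · obtain ⟨c₁, c₂, hmem, hsub⟩ := hse.exists_ball_inter_ball_subset hx p hε
      exact ⟨_, ⟨c₁, rfl⟩, _, ⟨c₂, rfl⟩, hmem, hsub⟩
end

section
/- In c₀ (the space of real sequences converging to 0 with the sup norm), the intersection of any two open balls of radius 1 is either empty or has diameter equal to 2. -/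
/-!
Let `x` lie in both balls and `t < 1`. Since `x - c₁` and `x - c₂` vanish at infinity, some
coordinate `a` has `|x a - cᵢ a| < 1 - t` for both `i`; changing `x a` alone by `± t` keeps `x`
in both balls, and the two modified points are `2 t` apart.
-/

open Metric Filter Topology Set
open scoped ZeroAtInfty

namespace ZeroAtInftyContinuousMap

variable {α β : Type*} [TopologicalSpace α]

section Update

variable [DiscreteTopology α] [DecidableEq α] [PseudoMetricSpace β] [Zero β]

noncomputable def update (f : C₀(α, β)) (a : α) (b : β) : C₀(α, β) where
  toFun := Function.update f a b
  continuous_toFun := continuous_of_discreteTopology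
  zero_at_infty' := f.zero_at_infty'.congr' <|
    mem_of_superset isCompact_singleton.compl_mem_cocompact fun _ hx =>
      show f _ = _ from (Function.update_of_ne hx b f).symm

@[simp]
theorem update_apply (f : C₀(α, β)) (a : α) (b : β) (x : α) :
    f.update a b x = Function.update f a b x :=
  rfl

theorem dist_update_lt {f g : C₀(α, β)} {a : α} {b : β} {r : ℝ} (hf : dist f g < r)
    (hb : dist b (g a) < r) : dist (f.update a b) g < r := by
  refine lt_of_le_of_lt ?_ (max_lt hf hb)
  rw [← dist_toBCF_eq_dist,
    BoundedContinuousFunction.dist_le (dist_nonneg.trans (le_max_left _ _))]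
  intro x
  rcases eq_or_ne x a with rfl | hx
  · simp
  · simpa [hx] using
      (BoundedContinuousFunction.dist_coe_le_dist (f := f.toBCF) (g := g.toBCF) x).trans
        (le_max_left _ (dist b (g a)))

end Update

theorem eventually_dist_apply_lt [PseudoMetricSpace β] [Zero β] (f g : C₀(α, β)) {ε : ℝ}
    (hε : 0 < ε) : ∀ᶠ x in cocompact α, dist (f x) (g x) < ε := by
  have : Tendsto (fun x => dist (f x) (g x)) (cocompact α) (𝓝 (dist (0 : β) 0)) :=
    f.zero_at_infty'.dist g.zero_at_infty'
  exact this.eventually_lt_const (by simpa using hε)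

variable [DiscreteTopology α] [NoncompactSpace α]

theorem two_mul_le_diam_ball_inter_ball {c₁ c₂ x : C₀(α, ℝ)} {r t : ℝ}
    (hx : x ∈ ball c₁ r ∩ ball c₂ r) (ht : t < r) :
    2 * t ≤ diam (ball c₁ r ∩ ball c₂ r) := by
  classical
  obtain ⟨a, ha₁, ha₂⟩ := ((eventually_dist_apply_lt x c₁ (sub_pos.2 ht)).and
    (eventually_dist_apply_lt x c₂ (sub_pos.2 ht))).exists
  rcases lt_or_ge t 0 with ht₀ | ht₀
  · linarith [diam_nonneg (s := ball c₁ r ∩ ball c₂ r)]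
  have mem : ∀ s, |s| ≤ t → x.update a (x a + s) ∈ ball c₁ r ∩ ball c₂ r := by
    intro s hs
    have shift : ∀ c : C₀(α, ℝ), dist (x a) (c a) < r - t → dist (x a + s) (c a) < r :=
      fun c hc => (dist_triangle _ (x a) _).trans_lt <| by
        rw [dist_self_add_left, Real.norm_eq_abs]; linarith
    exact ⟨dist_update_lt hx.1 (shift c₁ ha₁), dist_update_lt hx.2 (shift c₂ ha₂)⟩
  calc 2 * t = dist (x a + t) (x a + -t) := by
        rw [dist_add_left, Real.dist_eq, sub_neg_eq_add, abs_of_nonneg (by linarith)]; ring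
    _ ≤ dist (x.update a (x a + t)) (x.update a (x a + -t)) := by
        simpa using BoundedContinuousFunction.dist_coe_le_dist (f := (x.update a (x a + t)).toBCF)
          (g := (x.update a (x a + -t)).toBCF) a
    _ ≤ diam (ball c₁ r ∩ ball c₂ r) :=
        dist_le_diam_of_mem (isBounded_ball.subset inter_subset_left)
          (mem t (abs_of_nonneg ht₀).le) (mem (-t) (by rw [abs_neg, abs_of_nonneg ht₀]))

theorem diam_ball_inter_ball {c₁ c₂ : C₀(α, ℝ)} {r : ℝ}
    (h : (ball c₁ r ∩ ball c₂ r).Nonempty) :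
    diam (ball c₁ r ∩ ball c₂ r) = 2 * r := by
  obtain ⟨x, hx⟩ := h
  have hr : 0 < r := dist_nonneg.trans_lt hx.1
  refine le_antisymm ?_ (le_of_forall_lt_imp_le_of_dense fun d hd => ?_)
  · exact (diam_mono inter_subset_left isBounded_ball).trans (diam_ball hr.le)
  · simpa [mul_div_cancel₀] using two_mul_le_diam_ball_inter_ball hx (t := d / 2) (by linarith)

end ZeroAtInftyContinuousMap

theorem stmt_6 (c₁ c₂ : ZeroAtInftyContinuousMap ℕ ℝ) :
    Metric.ball c₁ 1 ∩ Metric.ball c₂ 1 = ∅ ∨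
    Metric.diam (Metric.ball c₁ 1 ∩ Metric.ball c₂ 1) = 2 := by
  rcases eq_empty_or_nonempty (ball c₁ 1 ∩ ball c₂ 1) with h | h
  · exact Or.inl h
  · exact Or.inr (by simpa using ZeroAtInftyContinuousMap.diam_ball_inter_ball h)
end

section
/- In L¹(0,1), any two open balls of radius 1 whose centers are at distance strictly less than 2 and with nonempty intersection have intersection of diameter 2: specifically, if f ∈ L¹(0,1) with 0 < ‖f‖ = 2λ < 2, then for every μ with λ < μ < 1 there exist g₁, g₂ in B(0,1) ∩ B(f,1) with ‖g₁ - g₂‖ = 2μ; hence the diameter of B(0,1) ∩ B(f,1) is 2. -/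
/-! Cutting `(0,1)` at a point `t` with `∫_{(0,t]} |f| = ‖f‖ / 2` (intermediate value theorem)
writes `f = u + v` with disjointly supported halves, so `‖a • u + b • v‖ = (|a| + |b|) λ`.
For `c = μ / λ ≥ 1` the points `c • u` and `c • v` lie in both balls of radius `μ` and are at
distance `2μ`. -/

open MeasureTheory Set Filter Topology Metric

theorem Metric.diam_eq_of_forall_lt_exists_le_dist {X : Type*} [PseudoMetricSpace X] {s : Set X}
    {d : ℝ} (hs : Bornology.IsBounded s) (hle : diam s ≤ d)
    (h : ∀ r < d, ∃ x ∈ s, ∃ y ∈ s, r ≤ dist x y) : diam s = d :=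
  le_antisymm hle <| le_of_forall_lt_imp_le_of_dense fun r hr ↦
    let ⟨_, hx, _, hy, hxy⟩ := h r hr
    hxy.trans (dist_le_diam_of_mem hs hx hy)

theorem exists_mem_closedBall_inter_closedBall_norm_sub_eq {E : Type*}
    [SeminormedAddCommGroup E] [NormedSpace ℝ E] {u v : E} {l c : ℝ}
    (h : ∀ a b : ℝ, ‖a • u + b • v‖ = (|a| + |b|) * l) (hc : 1 ≤ c) :
    ∃ g₁ g₂ : E, g₁ ∈ closedBall 0 (c * l) ∩ closedBall (u + v) (c * l) ∧
      g₂ ∈ closedBall 0 (c * l) ∩ closedBall (u + v) (c * l) ∧ ‖g₁ - g₂‖ = 2 * (c * l) := by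
  have habs : |c| = c := abs_of_nonneg (by linarith)
  have habs₁ : |c - 1| + |-1| = c := by rw [abs_of_nonneg (by linarith), abs_neg, abs_one]; ring
  refine ⟨c • u, c • v, ⟨?_, ?_⟩, ⟨?_, ?_⟩, ?_⟩
  · simpa [habs] using (h c 0).le
  · rw [mem_closedBall, dist_eq_norm,
      show c • u - (u + v) = (c - 1) • u + (-1 : ℝ) • v by module, h, habs₁]
  · simpa [habs] using (h 0 c).le
  · rw [mem_closedBall, dist_eq_norm,
      show c • v - (u + v) = (-1 : ℝ) • u + (c - 1) • v by module, h, add_comm, habs₁]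
  · rw [show c • u - c • v = c • u + (-c) • v by module, h, abs_neg, habs]
    ring

namespace MeasureTheory

variable {E : Type*} [NormedAddCommGroup E] [NormedSpace ℝ E]

theorem continuous_setIntegral_Iic {μ : Measure ℝ} [NullSingletonClass μ] {g : ℝ → E}
    (hg : Integrable g μ) : Continuous fun b ↦ ∫ x in Iic b, g x ∂μ :=
  continuous_iff_continuousAt.2 fun b ↦
    (hg.integrableOn.continuousOn_Iic_primitive_Iic (a₀ := b + 1)).continuousAt
      (Iic_mem_nhds (lt_add_one b))

theorem exists_setIntegral_Iic_eq {μ : Measure ℝ} [NullSingletonClass μ] {g : ℝ → ℝ}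
    (hg : Integrable g μ) {l : ℝ} (hl₀ : 0 < l) (hl : l < ∫ x, g x ∂μ) :
    ∃ a, ∫ x in Iic a, g x ∂μ = l := by
  have hbot : Tendsto (fun i : ℝ ↦ ∫ x in Iic (-i), g x ∂μ) atTop (𝓝 0) := by
    have hempty : ⋂ i : ℝ, Iic (-i) = ∅ :=
      eq_empty_of_forall_notMem fun x hx ↦ by
        have := mem_iInter.1 hx (-x + 1)
        simp only [mem_Iic] at this
        linarith
    simpa [hempty] using tendsto_setIntegral_of_antitone (fun _ ↦ measurableSet_Iic)
      (fun i j hij ↦ Iic_subset_Iic.2 (neg_le_neg hij)) ⟨0, hg.integrableOn⟩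
  have htop : Tendsto (fun i : ℝ ↦ ∫ x in Iic i, g x ∂μ) atTop (𝓝 (∫ x, g x ∂μ)) := by
    simpa [iUnion_Iic] using tendsto_setIntegral_of_monotone (fun _ ↦ measurableSet_Iic)
      (fun i j hij ↦ Iic_subset_Iic.2 hij) (by rwa [iUnion_Iic, integrableOn_univ])
  exact mem_range_of_exists_le_of_exists_ge (continuous_setIntegral_Iic hg)
    (let ⟨i, hi⟩ := (hbot.eventually (gt_mem_nhds hl₀)).exists; ⟨-i, hi.le⟩)
    ((htop.eventually (lt_mem_nhds hl)).exists.imp fun _ ↦ le_of_lt)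

namespace L1

variable {α : Type*} [MeasurableSpace α] {μ : Measure α}

theorem exists_add_eq_forall_norm_smul_add_smul (f : α →₁[μ] E) {A : Set α}
    (hA : MeasurableSet A) :
    ∃ u v : α →₁[μ] E, u + v = f ∧ ∀ a b : ℝ,
      ‖a • u + b • v‖ = |a| * ∫ x in A, ‖f x‖ ∂μ + |b| * ∫ x in Aᶜ, ‖f x‖ ∂μ := by
  have hf := L1.integrable_coeFn f
  have hu := hf.indicator hA
  have hv := hf.indicator hA.compl
  refine ⟨hu.toL1 _, hv.toL1 _, ?_, fun a b ↦ ?_⟩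
  · rw [← Integrable.toL1_add]
    convert Integrable.toL1_coeFn f hf using 2
    exact indicator_self_add_compl A _
  · rw [← Integrable.toL1_smul, ← Integrable.toL1_smul, ← Integrable.toL1_add,
      L1.norm_of_fun_eq_integral_norm]
    have hpt : ∀ x, ‖a • A.indicator f x + b • Aᶜ.indicator f x‖ =
        A.indicator (fun x ↦ |a| * ‖f x‖) x + Aᶜ.indicator (fun x ↦ |b| * ‖f x‖) x := by
      intro x
      by_cases hx : x ∈ A <;> simp [hx, norm_smul]
    simp only [Pi.add_apply, hpt]
    rw [MeasureTheory.integral_add ((hf.norm.const_mul _).indicator hA)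
        ((hf.norm.const_mul _).indicator hA.compl),
      integral_indicator hA, integral_indicator hA.compl, integral_const_mul, integral_const_mul]

theorem exists_add_eq_forall_norm_smul_add_smul_eq_half {μ : Measure ℝ} [NullSingletonClass μ]
    (f : ℝ →₁[μ] E) :
    ∃ u v : ℝ →₁[μ] E, u + v = f ∧ ∀ a b : ℝ, ‖a • u + b • v‖ = (|a| + |b|) * (‖f‖ / 2) := by
  rcases (norm_nonneg f).eq_or_lt with hf | hf
  · exact ⟨0, 0, by simpa [eq_comm] using hf, fun a b ↦ by simp [← hf]⟩
  have hint := (L1.integrable_coeFn f).norm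
  have hnorm : ∫ x, ‖f x‖ ∂μ = ‖f‖ := (L1.norm_eq_integral_norm f).symm
  obtain ⟨t, hle⟩ := exists_setIntegral_Iic_eq hint (half_pos hf) (by linarith)
  have hgt : ∫ x in (Iic t)ᶜ, ‖f x‖ ∂μ = ‖f‖ / 2 := by
    linarith [integral_add_compl (measurableSet_Iic (a := t)) hint]
  obtain ⟨u, v, huv, h⟩ := exists_add_eq_forall_norm_smul_add_smul f (measurableSet_Iic (a := t))
  exact ⟨u, v, huv, fun a b ↦ by rw [h, hle, hgt]; ring⟩

end L1

end MeasureTheory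

theorem stmt_7
    (f : Lp ℝ 1 (volume.restrict (Set.Ioo (0:ℝ) 1)))
    (l : ℝ) (hl0 : 0 < l) (hl1 : l < 1) (hf : ‖f‖ = 2 * l) :
    (∀ μ : ℝ, l < μ → μ < 1 →
      ∃ g₁ g₂ : Lp ℝ 1 (volume.restrict (Set.Ioo (0:ℝ) 1)),
        g₁ ∈ Metric.closedBall 0 1 ∩ Metric.closedBall f 1 ∧
        g₂ ∈ Metric.closedBall 0 1 ∩ Metric.closedBall f 1 ∧
        ‖g₁ - g₂‖ = 2 * μ) ∧
    Metric.diam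
      (Metric.closedBall (0 : Lp ℝ 1 (volume.restrict (Set.Ioo (0:ℝ) 1))) 1 ∩
        Metric.closedBall f 1) = 2 := by
  obtain ⟨u, v, rfl, huv⟩ := L1.exists_add_eq_forall_norm_smul_add_smul_eq_half f
  rw [hf, mul_div_cancel_left₀ l two_ne_zero] at huv
  have hpair : ∀ μ : ℝ, l < μ → μ < 1 → ∃ g₁ g₂ : Lp ℝ 1 (volume.restrict (Ioo (0:ℝ) 1)),
      g₁ ∈ closedBall 0 1 ∩ closedBall (u + v) 1 ∧ g₂ ∈ closedBall 0 1 ∩ closedBall (u + v) 1 ∧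
        ‖g₁ - g₂‖ = 2 * μ := by
    intro μ hlμ hμ1
    have hball := inter_subset_inter (closedBall_subset_closedBall (x := 0) hμ1.le)
      (closedBall_subset_closedBall (x := u + v) hμ1.le)
    obtain ⟨g₁, g₂, hg₁, hg₂, hg⟩ :=
      exists_mem_closedBall_inter_closedBall_norm_sub_eq huv ((one_le_div hl0).2 hlμ.le)
    rw [div_mul_cancel₀ μ hl0.ne'] at hg₁ hg₂ hg
    exact ⟨g₁, g₂, hball hg₁, hball hg₂, hg⟩
  refine ⟨hpair, diam_eq_of_forall_lt_exists_le_dist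
    (isBounded_closedBall.subset inter_subset_left) ?_ fun r hr ↦ ?_⟩
  · simpa using (diam_mono inter_subset_left isBounded_closedBall).trans
      (diam_closedBall (x := (0 : Lp ℝ 1 (volume.restrict (Ioo (0:ℝ) 1)))) zero_le_one)
  · obtain ⟨g₁, g₂, hg₁, hg₂, hg⟩ := hpair (max ((l + 1) / 2) (r / 2))
      (lt_max_of_lt_left (by linarith)) (max_lt (by linarith) (by linarith))
    exact ⟨g₁, hg₁, g₂, hg₂, by
      rw [dist_eq_norm, hg]; linarith [le_max_right ((l + 1) / 2) (r / 2)]⟩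
end

section
/- In L¹(0,1), for every ε > 0 there exist four open balls of radius 1 whose common intersection contains 0 and is contained in the ball B(0, ε). Explicitly, for 0 < δ < 1, letting χ(α,β) be the function equal to α on [0,1/2] and β on (1/2,1], the intersection of the open unit balls centered at χ(2-δ,0), χ(-2+δ,0), χ(0,2-δ), χ(0,-2+δ) contains 0 and is contained in the open ball of radius δ about 0. -/
/-!
Write `A = (0, 1/2]`, `B = (1/2, 1]` and `c = 2 - δ`. On `A`, `|f - c| + |f + c| ≥ 2c` pointwise,
so the distances from `f` to `χ(c, 0)` and `χ(-c, 0)` add up to at least `c + 2 ∫_B |f|`. Both are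
below `1`, whence `∫_B |f| < 1 - c/2 = δ/2`; symmetrically `∫_A |f| < δ/2`, so `‖f‖ < δ`.
-/

open MeasureTheory Set

noncomputable def mu01 : Measure ℝ := volume.restrict (Set.Ioo (0:ℝ) 1)

lemma mu01_Ioc_ne_top (a b : ℝ) : mu01 (Set.Ioc a b) ≠ ⊤ := by
  refine ne_top_of_le_ne_top ?_ (Measure.restrict_apply_le _ _)
  simp [measure_Ioc_lt_top.ne]

noncomputable def chi (a b : ℝ) : Lp ℝ 1 mu01 :=
  indicatorConstLp 1 measurableSet_Ioc (mu01_Ioc_ne_top 0 (1/2)) a +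
    indicatorConstLp 1 measurableSet_Ioc (mu01_Ioc_ne_top (1/2) 1) b

section General

variable {α E : Type*} [MeasurableSpace α] {μ : Measure α} [NormedAddCommGroup E]

theorem L1.norm_eq_setIntegral_norm_add_setIntegral_norm (f : Lp E 1 μ) {s t : Set α}
    (hst : Disjoint s t) (ht : MeasurableSet t) (h_cover : ∀ᵐ x ∂μ, x ∈ s ∪ t) :
    ‖f‖ = ∫ x in s, ‖f x‖ ∂μ + ∫ x in t, ‖f x‖ ∂μ := by
  have hf : Integrable (fun x => ‖f x‖) μ := (L1.integrable_coeFn f).norm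
  rw [L1.norm_eq_integral_norm, ← setIntegral_union hst ht hf.integrableOn hf.integrableOn,
    Measure.restrict_eq_self_of_ae_mem h_cover]

theorem two_mul_norm_mul_measureReal_le [NormedSpace ℝ E] {f : α → E} {s : Set α}
    (hf : IntegrableOn f s μ) (hs : μ s ≠ ⊤) (c : E) :
    2 * ‖c‖ * μ.real s ≤ ∫ x in s, ‖f x - c‖ ∂μ + ∫ x in s, ‖f x + c‖ ∂μ := by
  have hsub : IntegrableOn (fun x => ‖f x - c‖) s μ := (hf.sub (integrableOn_const hs)).norm
  have hadd : IntegrableOn (fun x => ‖f x + c‖) s μ := (hf.add (integrableOn_const hs)).norm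
  have hpt (x : α) : 2 * ‖c‖ ≤ ‖f x - c‖ + ‖f x + c‖ :=
    calc 2 * ‖c‖ = ‖(f x + c) - (f x - c)‖ := by
          rw [add_sub_sub_cancel, ← two_smul ℝ c, norm_smul, Real.norm_two]
      _ ≤ ‖f x + c‖ + ‖f x - c‖ := norm_sub_le _ _
      _ = ‖f x - c‖ + ‖f x + c‖ := add_comm _ _
  have : ∫ _ in s, 2 * ‖c‖ ∂μ ≤ ∫ x in s, (‖f x - c‖ + ‖f x + c‖) ∂μ :=
    setIntegral_mono (integrableOn_const hs) (hsub.add hadd) hpt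
  rwa [setIntegral_const, integral_add hsub hadd, smul_eq_mul, mul_comm] at this

end General

lemma mu01_eq_restrict_Ioc : mu01 = volume.restrict (Ioc (0:ℝ) 1) :=
  Measure.restrict_congr_set Ioo_ae_eq_Ioc

lemma mu01_real_Ioc {a b : ℝ} (ha : 0 ≤ a) (hab : a ≤ b) (hb : b ≤ 1) :
    mu01.real (Ioc a b) = b - a := by
  rw [mu01_eq_restrict_Ioc, measureReal_restrict_apply measurableSet_Ioc,
    inter_eq_self_of_subset_left (Ioc_subset_Ioc ha hb), Real.volume_real_Ioc_of_le hab]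

lemma ae_mem_Ioc_union_Ioc : ∀ᵐ x ∂mu01, x ∈ Ioc (0:ℝ) (1/2) ∪ Ioc (1/2) 1 := by
  rw [Ioc_union_Ioc_eq_Ioc (by norm_num) (by norm_num), mu01_eq_restrict_Ioc]
  exact ae_restrict_mem measurableSet_Ioc

lemma norm_eq_setIntegral_Ioc_add_setIntegral_Ioc (f : Lp ℝ 1 mu01) :
    ‖f‖ = ∫ x in Ioc 0 (1/2), ‖f x‖ ∂mu01 + ∫ x in Ioc (1/2) 1, ‖f x‖ ∂mu01 :=
  L1.norm_eq_setIntegral_norm_add_setIntegral_norm f (Ioc_disjoint_Ioc_of_le le_rfl)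
    measurableSet_Ioc ae_mem_Ioc_union_Ioc

lemma norm_chi_le (a b : ℝ) : ‖chi a b‖ ≤ |a| / 2 + |b| / 2 := by
  refine (norm_add_le _ _).trans (add_le_add ?_ ?_) <;>
  · refine norm_indicatorConstLp_le.trans_eq ?_
    rw [mu01_real_Ioc (by norm_num) (by norm_num) (by norm_num)]
    norm_num [div_eq_mul_inv]

lemma norm_sub_chi (f : Lp ℝ 1 mu01) (a b : ℝ) :
    ‖f - chi a b‖ = ∫ x in Ioc 0 (1/2), ‖f x - a‖ ∂mu01 + ∫ x in Ioc (1/2) 1, ‖f x - b‖ ∂mu01 := by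
  have hchi : ⇑(chi a b) =ᵐ[mu01] (Ioc 0 (1/2)).indicator (fun _ => a) +
      (Ioc (1/2) 1).indicator (fun _ => b) :=
    (Lp.coeFn_add _ _).trans (indicatorConstLp_coeFn.add indicatorConstLp_coeFn)
  have hdiff := (Lp.coeFn_sub f (chi a b)).trans (Filter.EventuallyEq.rfl.sub hchi)
  have hdisj : Disjoint (Ioc (0:ℝ) (1/2)) (Ioc (1/2) 1) := Ioc_disjoint_Ioc_of_le le_rfl
  rw [norm_eq_setIntegral_Ioc_add_setIntegral_Ioc]
  congr 1 <;> refine setIntegral_congr_ae measurableSet_Ioc ?_ <;>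
    filter_upwards [hdiff] with x hx hmem
  · rw [hx, Pi.sub_apply, Pi.add_apply, indicator_of_mem hmem,
      indicator_of_notMem (hdisj.notMem_of_mem_left hmem), add_zero]
  · rw [hx, Pi.sub_apply, Pi.add_apply, indicator_of_mem hmem,
      indicator_of_notMem (hdisj.notMem_of_mem_right hmem), zero_add]

theorem stmt_8 (δ : ℝ) (hδ0 : 0 < δ) (hδ1 : δ < 1) :
    (0 : Lp ℝ 1 mu01) ∈
      Metric.ball (chi (2 - δ) 0) 1 ∩ Metric.ball (chi (-2 + δ) 0) 1 ∩
        Metric.ball (chi 0 (2 - δ)) 1 ∩ Metric.ball (chi 0 (-2 + δ)) 1 ∧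
    Metric.ball (chi (2 - δ) 0) 1 ∩ Metric.ball (chi (-2 + δ) 0) 1 ∩
        Metric.ball (chi 0 (2 - δ)) 1 ∩ Metric.ball (chi 0 (-2 + δ)) 1 ⊆
      Metric.ball (0 : Lp ℝ 1 mu01) δ := by
  have hneg : (-2 + δ : ℝ) = -(2 - δ) := by ring
  have habs : |2 - δ| = 2 - δ := abs_of_pos (by linarith)
  constructor
  · refine ⟨⟨⟨?_, ?_⟩, ?_⟩, ?_⟩ <;>
    · rw [Metric.mem_ball, dist_comm, dist_zero_right]
      refine (norm_chi_le _ _).trans_lt ?_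
      simp only [hneg, abs_neg, habs, abs_zero]
      linarith
  · rintro f ⟨⟨⟨h₁, h₂⟩, h₃⟩, h₄⟩
    simp only [Metric.mem_ball, dist_eq_norm, norm_sub_chi, hneg, sub_zero, sub_neg_eq_add]
      at h₁ h₂ h₃ h₄ ⊢
    have hf (s : Set ℝ) : IntegrableOn f s mu01 := (L1.integrable_coeFn f).integrableOn
    have hA := two_mul_norm_mul_measureReal_le (hf (Ioc 0 (1/2))) (mu01_Ioc_ne_top _ _) (2 - δ)
    have hB := two_mul_norm_mul_measureReal_le (hf (Ioc (1/2) 1)) (mu01_Ioc_ne_top _ _) (2 - δ)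
    rw [mu01_real_Ioc (by norm_num) (by norm_num) (by norm_num), Real.norm_eq_abs, habs] at hA hB
    rw [norm_eq_setIntegral_Ioc_add_setIntegral_Ioc]
    linarith
end

section
/- Let X be a normed space in which the open balls of radius 1 form a subbase for the norm topology, let S ⊆ X be dense, and let T : S → S be a bijective step-isometry. Then T is continuous. -/
open Metric Set Filter Topology

/-!
Finite intersections of unit balls are a base of the topology, and the centres of those balls
may be taken in the dense set `S`: if `x ∈ ball c 1` and `d ∈ S` is close enough to `c`, the
midpoint of `x` and any `y ∈ ball d 1` lies in `ball c 1`. So `x` has arbitrarily small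
neighbourhoods of the form `{y | ∀ d ∈ D, dist y d < 1}` with `D ⊆ S` finite. A step-isometry
preserves the relation `dist < 1` in both directions and is onto `S`, so it maps the
neighbourhood of `x` cut out by `T⁻¹ D` into the one of `T x` cut out by `D`.
-/

theorem Dense.exists_dist_lt_one_forall_midpoint_mem_ball {X : Type*} [NormedAddCommGroup X]
    [NormedSpace ℝ X] {S : Set X} (hS : Dense S) {x c : X} (hxc : dist x c < 1) :
    ∃ d ∈ S, dist x d < 1 ∧ ∀ y, dist y d < 1 → midpoint ℝ x y ∈ ball c 1 := by
  obtain ⟨d, hdS, hcd⟩ := hS.exists_dist_lt c (sub_pos.2 hxc)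
  refine ⟨d, hdS, by linarith [dist_triangle x c d], fun y hyd => ?_⟩
  calc dist (midpoint ℝ x y) c = dist (midpoint ℝ x y) (midpoint ℝ c c) := by
        rw [midpoint_self]
    _ ≤ (dist x c + dist y c) / 2 := dist_midpoint_midpoint_le x y c c
    _ < 1 := by linarith [dist_triangle y d c, dist_comm c d]

theorem Dense.exists_finite_forall_dist_lt_one_imp_dist_lt {X : Type*} [NormedAddCommGroup X]
    [NormedSpace ℝ X]
    (hsub : TopologicalSpace.generateFrom {U : Set X | ∃ c : X, U = ball c 1} =
      (inferInstance : TopologicalSpace X))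
    {S : Set X} (hS : Dense S) (x : X) {ε : ℝ} (hε : 0 < ε) :
    ∃ D ⊆ S, D.Finite ∧ (∀ d ∈ D, dist x d < 1) ∧
      ∀ y, (∀ d ∈ D, dist y d < 1) → dist y x < ε := by
  obtain ⟨_, ⟨F, ⟨hF, hF_balls⟩, rfl⟩, hxF, hF_sub⟩ :=
    (TopologicalSpace.isTopologicalBasis_of_subbasis hsub.symm).exists_subset_of_mem_open
      (mem_ball_self (half_pos hε)) isOpen_ball
  have hcentre : ∀ U ∈ F, ∃ d ∈ S, dist x d < 1 ∧ ∀ y, dist y d < 1 → midpoint ℝ x y ∈ U := by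
    intro U hU
    obtain ⟨c, rfl⟩ := hF_balls hU
    exact hS.exists_dist_lt_one_forall_midpoint_mem_ball (mem_sInter.1 hxF _ hU)
  choose! d hdS hxd hd using hcentre
  refine ⟨d '' F, image_subset_iff.2 hdS, hF.image d, forall_mem_image.2 hxd, fun y hy => ?_⟩
  have hmid : dist (midpoint ℝ x y) x < ε / 2 :=
    hF_sub (mem_sInter.2 fun U hU => hd U hU y (hy _ (mem_image_of_mem d hU)))
  rw [dist_midpoint_left, Real.norm_ofNat, dist_comm] at hmid
  linarith

theorem continuous_of_dist_lt_one_iff {X Y : Type*} [NormedAddCommGroup X] [NormedSpace ℝ X]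
    [PseudoMetricSpace Y]
    (hsub : TopologicalSpace.generateFrom {U : Set X | ∃ c : X, U = ball c 1} =
      (inferInstance : TopologicalSpace X))
    {f : Y → X} (hf_dense : DenseRange f) (hf : ∀ y z, dist y z < 1 ↔ dist (f y) (f z) < 1) :
    Continuous f := by
  refine continuous_iff_continuousAt.2 fun y₀ => Metric.tendsto_nhds.2 fun ε hε => ?_
  obtain ⟨D, hD_range, hD, hy₀D, hD_sub⟩ :=
    hf_dense.exists_finite_forall_dist_lt_one_imp_dist_lt hsub (f y₀) hε
  have : Nonempty Y := ⟨y₀⟩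
  choose! g hg using fun d (hd : d ∈ D) => hD_range hd
  have hnear : ∀ᶠ y in 𝓝 y₀, ∀ d ∈ D, dist y (g d) < 1 :=
    (eventually_all_finite hD).2 fun d hd =>
      isOpen_ball.mem_nhds <| (hf _ _).2 <| (hg d hd).symm ▸ hy₀D d hd
  filter_upwards [hnear] with y hy
  exact hD_sub _ fun d hd => hg d hd ▸ (hf _ _).1 (hy d hd)

theorem stmt_9 {X : Type*} [NormedAddCommGroup X] [NormedSpace ℝ X]
    (hsub : TopologicalSpace.generateFrom {U : Set X | ∃ c : X, U = Metric.ball c 1} =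
      (inferInstance : TopologicalSpace X))
    (S : Set X) (hS : Dense S) (T : S → S) (hbij : Function.Bijective T)
    (hT : ∀ x y : S, ⌊‖(x : X) - (y : X)‖⌋ = ⌊‖(T x : X) - (T y : X)‖⌋) :
    Continuous T := by
  have hdense : DenseRange (Subtype.val ∘ T) := by
    rwa [DenseRange, range_comp, hbij.2.range_eq, image_univ, Subtype.range_coe]
  have hstep : ∀ x y : S, dist x y < 1 ↔ dist (T x : X) (T y) < 1 := fun x y => by
    have hlt_one : ∀ a : ℝ, 0 ≤ a → (a < 1 ↔ ⌊a⌋ = 0) := by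
      simp +contextual [Int.floor_eq_zero_iff]
    rw [Subtype.dist_eq, dist_eq_norm, dist_eq_norm, hlt_one _ (norm_nonneg _),
      hlt_one _ (norm_nonneg _), hT]
  exact (continuous_of_dist_lt_one_iff hsub hdense hstep).subtype_mk _
end

section
/- Let X be a reflexive Banach space, (xₙ) a sequence in X converging weakly to x, and B a closed ball not containing x. Then there exists an open ball D whose closure is disjoint from B and an N ∈ ℕ such that xₙ ∈ D for all n ≥ N. -/
/-!
Pass to the closed span `Y` of `x - w` and the `x n - w`: it is separable and reflexive, hence
has a separable dual. There a Baire category argument over a dense sequence of functionals gives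
points `u` at which the norm is approximately Fréchet differentiable, with derivative `f` such
that `f (x - w)` is nearly `‖x - w‖ > r`. Rescaling, the balls centred at `w + T • u` of radius
a bit less than `T * ‖u‖` stay away from `closedBall w r` and, on bounded sets, contain
everything where `f (· - w) > r + ε`; a weakly convergent sequence is bounded and eventually
lies in that half space.
-/

open NormedSpace Metric Filter Set TopologicalSpace Function Topology

section Dual

variable {E : Type*} [NormedAddCommGroup E] [NormedSpace ℝ E]

lemma Submodule.exists_dual_eq_zero_of_notMem (Y : Submodule ℝ E) (hY : IsClosed (Y : Set E))
    {z : E} (hz : z ∉ Y) : ∃ f : StrongDual ℝ E, (∀ y ∈ Y, f y = 0) ∧ f z ≠ 0 := by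
  have := hY
  have hz' : Y.mkQL z ≠ 0 := by simpa [Submodule.Quotient.mk_eq_zero] using hz
  obtain ⟨g, hg⟩ := SeparatingDual.exists_ne_zero (R := ℝ) hz'
  exact ⟨g.comp Y.mkQL, fun y hy => by simp [(Submodule.Quotient.mk_eq_zero Y).2 hy], hg⟩

lemma ContinuousLinearMap.exists_half_opNorm_le_norm_apply {F : Type*} [NormedAddCommGroup F]
    [NormedSpace ℝ F] (f : E →L[ℝ] F) : ∃ z : E, ‖z‖ ≤ 1 ∧ ‖f‖ / 2 ≤ ‖f z‖ := by
  rcases eq_or_ne f 0 with rfl | hf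
  · exact ⟨0, by simp⟩
  · obtain ⟨z, hz, hfz⟩ := f.exists_lt_apply_of_lt_opNorm (half_lt_self (norm_pos_iff.2 hf))
    exact ⟨z, hz.le, hfz.le⟩

/-- A nonzero functional vanishing on every `z k` would be far from every `φ k`. -/
lemma topologicalClosure_span_eq_top_of_denseRange {φ : ℕ → StrongDual ℝ E}
    (hφ : DenseRange φ) {z : ℕ → E} (hz1 : ∀ k, ‖z k‖ ≤ 1) (hz : ∀ k, ‖φ k‖ / 2 ≤ ‖φ k (z k)‖) :
    (Submodule.span ℝ (range z)).topologicalClosure = ⊤ := by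
  refine Submodule.eq_top_iff'.2 fun z₀ => by_contra fun hz₀ => ?_
  obtain ⟨f, hf0, hfz₀⟩ := Submodule.exists_dual_eq_zero_of_notMem _
    (Submodule.isClosed_topologicalClosure _) hz₀
  have hfpos : 0 < ‖f‖ := norm_pos_iff.2 fun h => hfz₀ (by simp [h])
  obtain ⟨k, hk⟩ := Metric.denseRange_iff.1 hφ f (‖f‖ / 4) (by positivity)
  have hfk : f (z k) = 0 :=
    hf0 _ (Submodule.le_topologicalClosure _ (Submodule.subset_span (mem_range_self k)))
  have hsmall : ‖f - φ k‖ < ‖f‖ / 4 := by rwa [← dist_eq_norm]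
  have hφk : ‖φ k (z k)‖ ≤ ‖f - φ k‖ :=
    calc ‖φ k (z k)‖ = ‖(f - φ k) (z k)‖ := by simp [hfk]
      _ ≤ ‖f - φ k‖ * ‖z k‖ := (f - φ k).le_opNorm _
      _ ≤ ‖f - φ k‖ := mul_le_of_le_one_right (norm_nonneg _) (hz1 k)
  linarith [hz k, norm_sub_norm_le f (φ k)]

lemma separableSpace_of_separableSpace_dual [SeparableSpace (StrongDual ℝ E)] :
    SeparableSpace E := by
  have : Nonempty (StrongDual ℝ E) := ⟨0⟩
  choose z hz1 hz using fun k => (denseSeq (StrongDual ℝ E) k).exists_half_opNorm_le_norm_apply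
  have hdense := topologicalClosure_span_eq_top_of_denseRange (denseRange_denseSeq _) hz1 hz
  have hsep : IsSeparable ((Submodule.span ℝ (range z)).topologicalClosure : Set E) := by
    rw [Submodule.topologicalClosure_coe]
    exact (countable_range z).isSeparable.span.closure
  rw [hdense, Submodule.top_coe] at hsep
  exact isSeparable_univ_iff.1 hsep

end Dual

section Reflexive

variable {E : Type*} [NormedAddCommGroup E] [NormedSpace ℝ E]

lemma Submodule.surjective_inclusionInDoubleDual (hrefl : Surjective (inclusionInDoubleDual ℝ E))
    (Y : Submodule ℝ E) (hY : IsClosed (Y : Set E)) : Surjective (inclusionInDoubleDual ℝ Y) := by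
  intro G
  let restrict : StrongDual ℝ E →L[ℝ] StrongDual ℝ Y :=
    (ContinuousLinearMap.compL ℝ Y E ℝ).flip Y.subtypeL
  obtain ⟨x₀, hx₀⟩ := hrefl (G.comp restrict)
  have hx₀f (f : StrongDual ℝ E) : f x₀ = G (restrict f) := DFunLike.congr_fun hx₀ f
  have hx₀Y : x₀ ∈ Y := by
    by_contra h
    obtain ⟨f, hf0, hfx₀⟩ := Y.exists_dual_eq_zero_of_notMem hY h
    have hf : restrict f = 0 := ContinuousLinearMap.ext fun y => hf0 y y.2
    exact hfx₀ (by rw [hx₀f, hf, map_zero])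
  refine ⟨⟨x₀, hx₀Y⟩, ContinuousLinearMap.ext fun g => ?_⟩
  obtain ⟨gE, hgE, -⟩ := exists_extension_norm_eq Y g
  have hg : restrict gE = g := ContinuousLinearMap.ext hgE
  calc g ⟨x₀, hx₀Y⟩ = gE x₀ := (hgE _).symm
    _ = G g := by rw [hx₀f, hg]

lemma separableSpace_dual_of_surjective_inclusionInDoubleDual [SeparableSpace E]
    (hrefl : Surjective (inclusionInDoubleDual ℝ E)) : SeparableSpace (StrongDual ℝ E) :=
  have : SeparableSpace (StrongDual ℝ (StrongDual ℝ E)) :=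
    hrefl.denseRange.separableSpace (inclusionInDoubleDual ℝ E).continuous
  separableSpace_of_separableSpace_dual

end Reflexive

section Norming

variable {E : Type*} [NormedAddCommGroup E] [NormedSpace ℝ E]

lemma abs_apply_sub_norm_le {g : StrongDual ℝ E} (hg : ‖g‖ ≤ 1) {a : E} (ha : g a = ‖a‖)
    (b : E) : |g b - ‖b‖| ≤ 2 * ‖b - a‖ := by
  have hgb : |g (b - a)| ≤ ‖b - a‖ := by
    simpa using g.le_of_opNorm_le hg (b - a)
  have hab : |‖a‖ - ‖b‖| ≤ ‖b - a‖ := by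
    rw [norm_sub_rev]; exact abs_norm_sub_norm_le a b
  have : g b - ‖b‖ = g (b - a) + (‖a‖ - ‖b‖) := by rw [map_sub, ha]; ring
  rw [this]
  linarith [abs_add_le (g (b - a)) (‖a‖ - ‖b‖)]

lemma sub_apply_le {g f : StrongDual ℝ E} {α : ℝ} (h : ‖g - f‖ ≤ α) (x : E) :
    g x - f x ≤ α * ‖x‖ :=
  (le_abs_self _).trans (by simpa using (g - f).le_of_opNorm_le h x)

def normingSet (f : StrongDual ℝ E) (α : ℝ) : Set E :=
  {y | ∃ g : StrongDual ℝ E, ‖g‖ ≤ 1 ∧ ‖g - f‖ ≤ α ∧ g y = ‖y‖}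

/-- Closedness comes from weak-* compactness of the admissible functionals. -/
lemma isClosed_normingSet (f : StrongDual ℝ E) (α : ℝ) : IsClosed (normingSet f α) := by
  refine isSeqClosed_iff_isClosed.mp fun ys y hys hlim => ?_
  choose gs hgs1 hgsf hgs using hys
  let K : Set (WeakDual ℝ E) :=
    WeakDual.toStrongDual ⁻¹' closedBall 0 1 ∩ WeakDual.toStrongDual ⁻¹' closedBall f α
  have hK : IsCompact K :=
    (WeakDual.isCompact_closedBall 0 1).inter_right (WeakDual.isClosed_closedBall f α)
  obtain ⟨g, ⟨hg1, hgf⟩, hg⟩ := hK.exists_mapClusterPt (f := atTop)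
    (u := fun j => StrongDual.toWeakDual (gs j)) <| le_principal_iff.2 <| mem_map.2 <|
      univ_mem' fun j => ⟨by simpa using hgs1 j, by simpa [dist_eq_norm] using hgsf j⟩
  have htend : Tendsto (fun j => gs j y) atTop (𝓝 ‖y‖) := by
    rw [tendsto_iff_norm_sub_tendsto_zero]
    refine squeeze_zero (fun _ => norm_nonneg _)
      (fun j => abs_apply_sub_norm_le (hgs1 j) (hgs j) y) ?_
    simpa using ((hlim.const_sub y).norm).const_mul 2
  have hgy : g y = ‖y‖ :=
    eq_of_nhds_neBot <| ClusterPt.mono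
      (hg.continuousAt_comp (f := fun h : WeakDual ℝ E => h y)
        (WeakDual.eval_continuous y).continuousAt) htend
  exact ⟨WeakDual.toStrongDual g, by simpa using hg1, by simpa [dist_eq_norm] using hgf, hgy⟩

lemma iUnion_normingSet_eq_univ {φ : ℕ → StrongDual ℝ E} (hφ : DenseRange φ) {α : ℝ}
    (hα : 0 < α) : ⋃ k, normingSet (φ k) α = univ := by
  refine eq_univ_of_forall fun y => ?_
  obtain ⟨g, hg1, hgy⟩ := exists_dual_vector'' ℝ y
  obtain ⟨k, hk⟩ := Metric.denseRange_iff.1 hφ g α hα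
  exact mem_iUnion.2 ⟨k, g, hg1, by rw [← dist_eq_norm]; exact hk.le, by simpa using hgy⟩

/-- Baire category for the countable closed cover by the sets `normingSet (φ k) α`, with `φ`
dense in the dual. -/
lemma exists_normingSet_mem_nhds [CompleteSpace E] [SeparableSpace (StrongDual ℝ E)] {α : ℝ}
    (hα : 0 < α) {U : Set E} (hU : IsOpen U) (hne : U.Nonempty) :
    ∃ f : StrongDual ℝ E, ∃ u ∈ U, normingSet f α ∈ 𝓝 u := by
  have : Nonempty (StrongDual ℝ E) := ⟨0⟩
  have hdense := dense_iUnion_interior_of_closed (fun k => isClosed_normingSet _ α)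
    (iUnion_normingSet_eq_univ (denseRange_denseSeq (StrongDual ℝ E)) hα)
  obtain ⟨u, huU, hu⟩ := hdense.inter_open_nonempty U hU hne
  obtain ⟨k, hk⟩ := mem_iUnion.1 hu
  exact ⟨_, u, huU, mem_interior_iff_mem_nhds.1 hk⟩

lemma eventually_norm_add_le_of_normingSet_mem_nhds {f : StrongDual ℝ E} {α : ℝ} {u : E}
    (hu : normingSet f α ∈ 𝓝 u) : ∀ᶠ h in 𝓝 0, ‖u + h‖ ≤ ‖u‖ + f h + α * ‖h‖ := by
  have hlim : Tendsto (fun h : E => u + h) (𝓝 0) (𝓝 u) := by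
    simpa using (continuous_const_add u).tendsto (0 : E)
  filter_upwards [hlim.eventually_mem hu] with h ⟨g, hg1, hgf, hg⟩
  have hgu : g u ≤ ‖u‖ := (le_abs_self _).trans (by simpa using g.le_of_opNorm_le hg1 u)
  rw [← hg, map_add]
  linarith [sub_apply_le hgf h]

lemma sub_two_mul_norm_sub_le_apply {f : StrongDual ℝ E} {α : ℝ} {u : E}
    (hu : u ∈ normingSet f α) (z : E) : ‖z‖ - 2 * ‖z - u‖ - α * ‖z‖ ≤ f z := by
  obtain ⟨g, hg1, hgf, hg⟩ := hu
  linarith [neg_abs_le (g z - ‖z‖), abs_apply_sub_norm_le hg1 hg z, sub_apply_le hgf z]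

/-- The norm is `κ`-approximately Fréchet differentiable at `u`, with derivative `f`. -/
lemma exists_apply_gt_eventually_norm_add_le [CompleteSpace E] [SeparableSpace (StrongDual ℝ E)]
    {z : E} {θ κ : ℝ} (hθ : θ < ‖z‖) (hκ : 0 < κ) :
    ∃ (u : E) (f : StrongDual ℝ E), θ < f z ∧ ∀ᶠ h in 𝓝 0, ‖u + h‖ ≤ ‖u‖ + f h + κ * ‖h‖ := by
  set a := ‖z‖ - θ
  have ha : 0 < a := sub_pos.2 hθ
  set α := min κ (a / (2 * ‖z‖ + 1))
  have hα : 0 < α := lt_min hκ (by positivity)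
  have hακ : α ≤ κ := min_le_left _ _
  have hαz : 2 * α * ‖z‖ ≤ a := by
    have := (le_div_iff₀ (by positivity : (0 : ℝ) < 2 * ‖z‖ + 1)).1 (min_le_right _ _ : α ≤ _)
    nlinarith [norm_nonneg z]
  obtain ⟨f, u, huz, hu⟩ :=
    exists_normingSet_mem_nhds hα isOpen_ball (nonempty_ball (x := z).2 (by positivity : 0 < a / 4))
  refine ⟨u, f, ?_, ?_⟩
  · have hzu : ‖z - u‖ < a / 4 := by rw [← dist_eq_norm, dist_comm]; exact huz
    linarith [sub_two_mul_norm_sub_le_apply (mem_of_mem_nhds hu) z]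
  · filter_upwards [eventually_norm_add_le_of_normingSet_mem_nhds hu] with h hh
    linarith [mul_le_mul_of_nonneg_right hακ (norm_nonneg h)]

end Norming

section Geometry

variable {E : Type*} [NormedAddCommGroup E] [NormedSpace ℝ E]

/-- Rescaled: on bounded sets, the large balls centred at `T • u` through `0` almost fill the
half space `{f > 0}`. -/
lemma eventually_norm_smul_sub_le {u : E} {f : StrongDual ℝ E} {κ : ℝ}
    (hu : ∀ᶠ h in 𝓝 0, ‖u + h‖ ≤ ‖u‖ + f h + κ * ‖h‖) (M : ℝ) :
    ∀ᶠ T in atTop, ∀ y : E, ‖y‖ ≤ M → ‖T • u - y‖ ≤ T * ‖u‖ - f y + κ * ‖y‖ := by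
  obtain ⟨δ, hδ, hδu⟩ := Metric.eventually_nhds_iff.1 hu
  filter_upwards [eventually_gt_atTop (max 0 (M / δ))] with T hT y hy
  have hT0 : 0 < T := (le_max_left _ _).trans_lt hT
  have hsmall : ‖(-T⁻¹) • y‖ < δ := by
    rw [norm_smul, norm_neg, norm_inv, Real.norm_of_nonneg hT0.le, inv_mul_lt_iff₀ hT0]
    calc ‖y‖ ≤ M := hy
      _ < T * δ := by rw [← div_lt_iff₀ hδ]; exact (le_max_right _ _).trans_lt hT
  have key := hδu (by rwa [dist_zero_right])
  have hTu : T • u - y = T • (u + (-T⁻¹) • y) := by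
    rw [smul_add, smul_smul, mul_neg, mul_inv_cancel₀ hT0.ne', neg_one_smul, sub_eq_add_neg]
  rw [hTu, norm_smul, Real.norm_of_nonneg hT0.le]
  calc T * ‖u + (-T⁻¹) • y‖ ≤ T * (‖u‖ + f ((-T⁻¹) • y) + κ * ‖(-T⁻¹) • y‖) :=
        mul_le_mul_of_nonneg_left key hT0.le
    _ = T * ‖u‖ - f y + κ * ‖y‖ := by
        rw [map_smul, smul_eq_mul, norm_smul, norm_neg, norm_inv, Real.norm_of_nonneg hT0.le]
        field_simp
        ring

end Geometry

section WeakConvergence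

variable {E : Type*} [NormedAddCommGroup E] [NormedSpace ℝ E]

lemma bddAbove_range_norm_of_tendsto_dual {y_ : ℕ → E} {z : E}
    (hconv : ∀ f : StrongDual ℝ E, Tendsto (fun n => f (y_ n)) atTop (𝓝 (f z))) :
    BddAbove (range fun n => ‖y_ n‖) := by
  obtain ⟨C, hC⟩ := banach_steinhaus (g := fun n => inclusionInDoubleDual ℝ E (y_ n)) fun f =>
    let ⟨C, hC⟩ := (hconv f).norm.bddAbove_range
    ⟨C, fun n => hC (mem_range_self n)⟩
  exact ⟨C, forall_mem_range.2 fun n =>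
    (inclusionInDoubleDualLi ℝ (E := E)).norm_map (y_ n) ▸ hC n⟩

lemma Submodule.tendsto_dual_apply {ι : Type*} {l : Filter ι} (Y : Submodule ℝ E) {y_ : ι → Y}
    {y : Y} (hconv : ∀ F : StrongDual ℝ E, Tendsto (fun n => F (y_ n)) l (𝓝 (F y)))
    (f : StrongDual ℝ Y) : Tendsto (fun n => f (y_ n)) l (𝓝 (f y)) := by
  obtain ⟨F, hF, -⟩ := exists_extension_norm_eq Y f
  simpa only [hF] using hconv F

theorem exists_ball_eventually_mem_of_tendsto_dual [CompleteSpace E]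
    [SeparableSpace (StrongDual ℝ E)] {y_ : ℕ → E} {z : E}
    (hconv : ∀ f : StrongDual ℝ E, Tendsto (fun n => f (y_ n)) atTop (𝓝 (f z)))
    {r : ℝ} (hr : r < ‖z‖) :
    ∃ (c : E) (ρ : ℝ), 0 < ρ ∧ r + ρ < ‖c‖ ∧ ∀ᶠ n in atTop, y_ n ∈ ball c ρ := by
  obtain ⟨M, hM⟩ := bddAbove_range_norm_of_tendsto_dual hconv
  have hyM (n : ℕ) : ‖y_ n‖ ≤ M := hM (mem_range_self n)
  have hM0 : 0 ≤ M := (norm_nonneg _).trans (hyM 0)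
  set ε := (‖z‖ - r) / 2
  have hε : 0 < ε := by simp only [ε]; linarith
  obtain ⟨u, f, hfz, hu⟩ := exists_apply_gt_eventually_norm_add_le (z := z) (θ := r + ε)
    (κ := ε / (2 * (M + 1))) (by simp only [ε]; linarith) (by positivity)
  obtain ⟨T, hT, hT0⟩ :=
    ((eventually_norm_smul_sub_le hu (M + 1)).and (eventually_ge_atTop 0)).exists
  have hball : ∀ᶠ n in atTop, y_ n ∈ ball (T • u) (T * ‖u‖ - r - ε / 2) := by
    filter_upwards [(hconv f).eventually (lt_mem_nhds hfz)] with n hn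
    have hκ : ε / (2 * (M + 1)) * ‖y_ n‖ ≤ ε / 2 := by
      calc ε / (2 * (M + 1)) * ‖y_ n‖ ≤ ε / (2 * (M + 1)) * (M + 1) := by gcongr; linarith [hyM n]
        _ = ε / 2 := by field_simp
    rw [mem_ball, dist_comm, dist_eq_norm]
    linarith [hT (y_ n) (by linarith [hyM n])]
  obtain ⟨n, hn⟩ := hball.exists
  refine ⟨T • u, _, pos_of_mem_ball hn, ?_, hball⟩
  rw [norm_smul, Real.norm_of_nonneg hT0]
  linarith

end WeakConvergence

theorem stmt_11 {X : Type*} [NormedAddCommGroup X] [NormedSpace ℝ X] [CompleteSpace X]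
    (hrefl : Function.Surjective (NormedSpace.inclusionInDoubleDual ℝ X))
    (x_ : ℕ → X) (x : X)
    (hconv : ∀ f : X →L[ℝ] ℝ,
      Filter.Tendsto (fun n => f (x_ n)) Filter.atTop (nhds (f x)))
    (w : X) (r : ℝ) (hx : x ∉ Metric.closedBall w r) :
    ∃ (c : X) (ρ : ℝ), 0 < ρ ∧
      Disjoint (closure (Metric.ball c ρ)) (Metric.closedBall w r) ∧
      ∃ N : ℕ, ∀ n ≥ N, x_ n ∈ Metric.ball c ρ := by
  set S : Set X := insert (x - w) (range fun n => x_ n - w)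
  set Y := (Submodule.span ℝ S).topologicalClosure
  have hYc : IsClosed (Y : Set X) := Submodule.isClosed_topologicalClosure _
  have hSY : S ⊆ Y := Submodule.subset_span.trans (Submodule.le_topologicalClosure _)
  have : CompleteSpace Y := hYc.completeSpace_coe
  have : SeparableSpace Y := by
    refine IsSeparable.separableSpace ?_
    rw [Submodule.topologicalClosure_coe]
    exact ((countable_range _).insert _).isSeparable.span.closure
  have : SeparableSpace (StrongDual ℝ Y) := separableSpace_dual_of_surjective_inclusionInDoubleDual
    (Y.surjective_inclusionInDoubleDual hrefl hYc)
  let y_ (n : ℕ) : Y := ⟨x_ n - w, hSY (mem_insert_of_mem _ (mem_range_self n))⟩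
  let z : Y := ⟨x - w, hSY (mem_insert _ _)⟩
  have hyz : ∀ F : StrongDual ℝ X, Tendsto (fun n => F (y_ n)) atTop (𝓝 (F z)) := fun F => by
    simpa [y_, z] using (hconv F).sub_const (F w)
  obtain ⟨c, ρ, hρ, hρc, htail⟩ := exists_ball_eventually_mem_of_tendsto_dual
    (Y.tendsto_dual_apply hyz) (r := r) (by simpa [z, dist_eq_norm] using hx)
  refine ⟨w + c, ρ, hρ, ?_, eventually_atTop.1 ?_⟩
  · refine (closedBall_disjoint_closedBall ?_).mono_left closure_ball_subset_closedBall
    simpa [dist_eq_norm, add_comm] using hρc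
  · filter_upwards [htail] with n hn
    simpa [y_, dist_eq_norm, sub_sub] using hn
end

section
/- Let X be a reflexive Banach space, S ⊆ X dense, and T : S → S a bijective step-isometry. Suppose (xₙ) is a sequence in S converging weakly to x, and T(xₙ) converges weakly to x'. Then for every y ∈ S and m ∈ ℕ with ‖x - y‖ < m, we have ‖x' - T(y)‖ ≤ m. -/
/-!
Suppose `‖x' - T y‖ > m`. A weakly null sequence `w` cannot, for every `u` pointing in a given
direction, eventually stay at distance `≥ ‖u‖ + ε` from `u`: otherwise a greedily chosen
subsequence would have all its convex combinations of norm `≥ ε / 2`, contradicting Mazur's lemma.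
A functional norming such a `u` then produces `s ∈ S` and `k ∈ ℕ` such that `‖T (x n) - s‖ < k`
frequently while `‖s - T y‖ ≥ m + k`. As `T` preserves `⌊‖·‖⌋`, the point `t = T⁻¹ s` satisfies
`‖x n - t‖ < k` frequently, hence `‖x - t‖ ≤ k` by weak lower semicontinuity of the norm, and
`‖t - y‖ ≥ m + k`; this contradicts `‖x - y‖ < m`.
-/

open Filter Topology Metric Set

theorem exists_seq_forall_image_Iio {α : Type*} {P : ℕ → Set α → α → Prop}
    (h : ∀ k s, s.Finite → ∃ a, P k s a) : ∃ N : ℕ → α, ∀ k, P k (N '' Iio k) (N k) := by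
  have : Nonempty α := ⟨(h 0 ∅ finite_empty).choose⟩
  choose! f hf using h
  let N : ℕ → α := Nat.strongRec fun k prev => f k (range fun i : Fin k => prev i i.isLt)
  refine ⟨N, fun k => ?_⟩
  have hNk : N k = f k (N '' Iio k) := by
    rw [show N k = f k (range fun i : Fin k => N i) from Nat.strongRec_eq _ k,
      ← Fin.range_val, ← range_comp]
    rfl
  exact hNk ▸ hf _ _ ((finite_Iio k).image N)

theorem convexHull_range_subset_iUnion_image_Iio {E : Type*} [AddCommGroup E] [Module ℝ E]
    (v : ℕ → E) : convexHull ℝ (range v) ⊆ ⋃ k, convexHull ℝ (v '' Iio k) := by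
  refine convexHull_min ?_ (Directed.convex_iUnion ?_ fun k => convex_convexHull ℝ _)
  · rintro _ ⟨i, rfl⟩
    exact mem_iUnion.2 ⟨i + 1, subset_convexHull ℝ _ ⟨i, Nat.lt_succ_self i, rfl⟩⟩
  · exact Monotone.directed_le fun j k hjk => convexHull_mono (image_mono (Iio_subset_Iio hjk))

section

variable {X : Type*} [NormedAddCommGroup X] [NormedSpace ℝ X]

def WeakTendsto (w : ℕ → X) (x : X) : Prop :=
  ∀ f : StrongDual ℝ X, Tendsto (fun n => f (w n)) atTop (𝓝 (f x))

theorem WeakTendsto.sub_const {w : ℕ → X} {x : X} (hw : WeakTendsto w x) (c : X) :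
    WeakTendsto (fun n => w n - c) (x - c) := fun f => by
  simpa only [map_sub] using (hw f).sub_const (f c)

theorem WeakTendsto.comp_tendsto {w : ℕ → X} {x : X} (hw : WeakTendsto w x) {N : ℕ → ℕ}
    (hN : Tendsto N atTop atTop) : WeakTendsto (w ∘ N) x := fun f => (hw f).comp hN

theorem WeakTendsto.exists_norm_le {w : ℕ → X} {x : X} (hw : WeakTendsto w x) :
    ∃ C, ∀ n, ‖w n‖ ≤ C := by
  obtain ⟨C, hC⟩ : ∃ C, ∀ n, ‖NormedSpace.inclusionInDoubleDual ℝ X (w n)‖ ≤ C :=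
    banach_steinhaus fun f => by
      obtain ⟨C, hC⟩ := (hw f).norm.bddAbove_range
      exact ⟨C, fun n => by simpa using hC (mem_range_self n)⟩
  exact ⟨C, fun n => (NormedSpace.inclusionInDoubleDualLi ℝ).norm_map (w n) ▸ hC n⟩

theorem WeakTendsto.norm_le_of_frequently {w : ℕ → X} {x : X} (hw : WeakTendsto w x) {r : ℝ}
    (h : ∃ᶠ n in atTop, ‖w n‖ ≤ r) : ‖x‖ ≤ r := by
  obtain ⟨n, hn⟩ := h.exists
  refine NormedSpace.norm_le_dual_bound ℝ x ((norm_nonneg _).trans hn) fun f => ?_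
  refine le_of_tendsto_of_frequently (hw f).norm (h.mono fun n hn => ?_)
  calc ‖f (w n)‖ ≤ ‖f‖ * ‖w n‖ := f.le_opNorm _
    _ ≤ r * ‖f‖ := by rw [mul_comm]; gcongr

theorem WeakTendsto.zero_mem_closure_convexHull {w : ℕ → X} (hw : WeakTendsto w 0) :
    (0 : X) ∈ closure (convexHull ℝ (range w)) := by
  by_contra h
  obtain ⟨f, u, hfu, hu⟩ :=
    geometric_hahn_banach_closed_point (convex_convexHull ℝ _).closure isClosed_closure h
  have hlim : (0 : ℝ) ≤ u := by
    simpa using le_of_tendsto' (hw f) fun n =>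
      (hfu _ (subset_closure (subset_convexHull ℝ _ (mem_range_self n)))).le
  simp only [map_zero] at hu
  linarith

theorem add_mul_le_norm_sub_smul_of_le {B W : X} {ε t₀ t : ℝ} (ht₀ : 0 < t₀) (ht : t₀ ≤ t)
    (h : ‖B‖ + t₀ * ε ≤ ‖B - t₀ • W‖) : ‖B‖ + t * ε ≤ ‖B - t • W‖ := by
  have htpos : 0 < t := ht₀.trans_le ht
  set r := t₀ / t
  have hr : r * t = t₀ := div_mul_cancel₀ _ htpos.ne'
  have hr0 : 0 < r := div_pos ht₀ htpos
  have hr1 : r ≤ 1 := (div_le_one htpos).2 ht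
  have hconv : ‖B - t₀ • W‖ ≤ r * ‖B - t • W‖ + (1 - r) * ‖B‖ := by
    calc ‖B - t₀ • W‖ = ‖r • (B - t • W) + (1 - r) • B‖ := by
          rw [smul_sub, smul_smul, hr, sub_smul, one_smul]; abel_nf
      _ ≤ r * ‖B - t • W‖ + (1 - r) * ‖B‖ := by
          refine (norm_add_le _ _).trans_eq ?_
          rw [norm_smul_of_nonneg hr0.le, norm_smul_of_nonneg (by linarith)]
  have : r * (‖B‖ + t * ε) ≤ r * ‖B - t • W‖ := by
    have : r * (‖B‖ + t * ε) = r * ‖B‖ + t₀ * ε := by rw [← hr]; ring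
    linarith
  exact le_of_mul_le_mul_left this hr0

theorem eventually_forall_le_norm_sub_smul {w : ℕ → X} {a : X} {K : Set X} {C ε δ : ℝ}
    (hC : ∀ n, ‖w n‖ ≤ C) (hε : 0 < ε) (hδ : 0 < δ) (hK : TotallyBounded K)
    (H : ∀ z ∈ K, ∀ τ ∈ Ioc (0 : ℝ) 1, ∀ᶠ n in atTop, ‖a - z‖ + τ * ε ≤ ‖a - z - τ • w n‖) :
    ∀ᶠ n in atTop, ∀ z ∈ K, ∀ t ∈ Icc (0 : ℝ) 1,
      ‖a - z‖ + t * ε - δ ≤ ‖a - z - t • w n‖ := by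
  have hCε : 0 < C + ε := by linarith [(norm_nonneg _).trans (hC 0)]
  set t₀ := min 1 (δ / (C + ε))
  have ht₀ : 0 < t₀ := lt_min one_pos (div_pos hδ hCε)
  obtain ⟨F, hFK, hF, hKF⟩ := finite_approx_of_totallyBounded hK (δ / 2) (half_pos hδ)
  filter_upwards [(eventually_all_finite hF).2 fun y hy => H y (hFK hy) t₀ ⟨ht₀, min_le_left _ _⟩]
    with n hn z hz t ht
  -- a small `t` costs at most `t * (C + ε) ≤ δ`; a large one is handled at a net point `y`
  rcases le_or_gt t t₀ with hsmall | hlarge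
  · have htC : t * (C + ε) ≤ δ :=
      calc t * (C + ε) ≤ t₀ * (C + ε) := by gcongr
        _ ≤ δ / (C + ε) * (C + ε) := by gcongr; exact min_le_right _ _
        _ = δ := div_mul_cancel₀ _ hCε.ne'
    have hw : ‖t • w n‖ ≤ t * C := by
      rw [norm_smul_of_nonneg ht.1]; exact mul_le_mul_of_nonneg_left (hC n) ht.1
    linarith [norm_sub_norm_le (a - z) (t • w n)]
  · obtain ⟨y, hyF, hzy⟩ := mem_iUnion₂.1 (hKF hz)
    have hy := add_mul_le_norm_sub_smul_of_le ht₀ hlarge.le (hn y hyF)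
    rw [mem_ball, dist_eq_norm] at hzy
    have h1 : ‖a - z‖ ≤ ‖a - y‖ + ‖z - y‖ :=
      calc ‖a - z‖ = ‖(a - y) - (z - y)‖ := by congr 1; abel
        _ ≤ _ := norm_sub_le _ _
    have h2 : ‖a - y - t • w n‖ ≤ ‖a - z - t • w n‖ + ‖z - y‖ :=
      calc ‖a - y - t • w n‖ = ‖(a - z - t • w n) + (z - y)‖ := by congr 1; abel
        _ ≤ _ := norm_add_le _ _
    linarith

theorem add_mul_sub_sum_le_norm_sub_smul {v : ℕ → X} {a : X} {ε : ℝ} {δ : ℕ → ℝ}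
    (hδ : ∀ k, 0 ≤ δ k)
    (hstep : ∀ k, ∀ y ∈ convexHull ℝ (insert 0 (v '' Iio k)), ∀ t ∈ Icc (0 : ℝ) 1,
      ‖a - y‖ + t * ε - δ k ≤ ‖a - y - t • v k‖) (k : ℕ) :
    ∀ z ∈ convexHull ℝ (v '' Iio k), ∀ s ∈ Icc (0 : ℝ) 1,
      ‖a‖ + s * ε - ∑ i ∈ Finset.range k, δ i ≤ ‖a - s • z‖ := by
  induction k with
  | zero => simp
  | succ k ih =>
    intro z hz s hs
    have hD : 0 ≤ ∑ i ∈ Finset.range k, δ i := Finset.sum_nonneg fun i _ => hδ i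
    rw [Finset.sum_range_succ]
    rw [← Order.succ_eq_add_one, Order.Iio_succ_eq_insert, image_insert_eq] at hz
    rcases (v '' Iio k).eq_empty_or_nonempty with hV | hV
    · rw [hV, insert_empty_eq, convexHull_singleton, mem_singleton_iff] at hz
      have := hstep k 0 (subset_convexHull ℝ _ (mem_insert 0 _)) s hs
      rw [sub_zero, ← hz] at this
      linarith
    obtain ⟨_, rfl, z', hz', p, q, hp, hq, hpq, rfl⟩ :=
      mem_convexJoin.1 ((convexHull_insert hV).subset hz)
    have hsq : s * q ∈ Icc (0 : ℝ) 1 :=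
      ⟨mul_nonneg hs.1 hq, mul_le_one₀ hs.2 hq (by linarith)⟩
    have hsp : s * p ∈ Icc (0 : ℝ) 1 :=
      ⟨mul_nonneg hs.1 hp, mul_le_one₀ hs.2 hp (by linarith)⟩
    have hy : (s * q) • z' ∈ convexHull ℝ (insert 0 (v '' Iio k)) :=
      (convex_convexHull ℝ _).smul_mem_of_zero_mem (subset_convexHull ℝ _ (mem_insert 0 _))
        (convexHull_mono (subset_insert _ _) hz') hsq
    have h1 := ih z' hz' (s * q) hsq
    have h2 := hstep k _ hy (s * p) hsp
    have hsplit : a - s • (p • v k + q • z') = a - (s * q) • z' - (s * p) • v k := by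
      rw [smul_add, smul_smul, smul_smul]; abel
    have hs' : s * ε = s * q * ε + s * p * ε := by
      rw [← add_mul, ← mul_add, add_comm q, hpq, mul_one]
    rw [hsplit]
    linarith

theorem exists_frequently_norm_sub_smul_lt {w : ℕ → X} {C ε : ℝ} (hw : WeakTendsto w 0)
    (hC : ∀ n, ‖w n‖ ≤ C) (a : X) (hε : 0 < ε) :
    ∃ z ∈ closedBall (0 : X) C, ∃ τ ∈ Ioc (0 : ℝ) 1,
      ∃ᶠ n in atTop, ‖a - z - τ • w n‖ < ‖a - z‖ + τ * ε := by
  by_contra! H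
  set δ : ℕ → ℝ := fun i => ε / 4 * (1 / 2) ^ i
  have hδ : ∀ i, 0 < δ i := fun i => by positivity
  have hδsum : ∀ k, ∑ i ∈ Finset.range k, δ i ≤ ε / 2 := fun k => by
    rw [← Finset.mul_sum]
    nlinarith [sum_geometric_two_le k]
  have hC0 : 0 ≤ C := (norm_nonneg _).trans (hC 0)
  obtain ⟨N, hN⟩ := exists_seq_forall_image_Iio (P := fun k s M => k ≤ M ∧
      ∀ y ∈ convexHull ℝ (insert 0 (w '' s)), ∀ t ∈ Icc (0 : ℝ) 1,
        ‖a - y‖ + t * ε - δ k ≤ ‖a - y - t • w M‖) fun k s hs => by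
    have hK := ((hs.image w).insert 0).isCompact_convexHull ℝ
    have hKC : convexHull ℝ (insert 0 (w '' s)) ⊆ closedBall 0 C :=
      convexHull_min (insert_subset (mem_closedBall_self hC0)
        (image_subset_iff.2 fun n _ => mem_closedBall_zero_iff.2 (hC n))) (convex_closedBall 0 C)
    exact ((eventually_ge_atTop k).and (eventually_forall_le_norm_sub_smul hC hε (hδ k)
      hK.totallyBounded fun z hz => H z (hKC hz))).exists
  have hinv := add_mul_sub_sum_le_norm_sub_smul (v := w ∘ N) (a := a) (ε := ε)
    (fun i => (hδ i).le) fun k => by rw [image_comp]; exact (hN k).2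
  have hwN := hw.comp_tendsto (tendsto_atTop_mono (fun k => (hN k).1) tendsto_id)
  obtain ⟨z, hz, hzε⟩ := mem_closure_iff.1 hwN.zero_mem_closure_convexHull (ε / 2) (by positivity)
  rw [dist_zero_left] at hzε
  obtain ⟨k, hk⟩ := mem_iUnion.1 (convexHull_range_subset_iUnion_image_Iio _ hz)
  have := hinv k z hk 1 ⟨zero_le_one, le_rfl⟩
  rw [one_smul, one_mul] at this
  linarith [norm_sub_le a z, hδsum k]

theorem norm_smul_sub_lt_of_one_le {u w : X} {ε τ : ℝ} (hτ : 1 ≤ τ) (h : ‖u - w‖ < ‖u‖ + ε) :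
    ‖τ • u - w‖ < ‖τ • u‖ + ε :=
  calc ‖τ • u - w‖ = ‖(τ - 1) • u + (u - w)‖ := by rw [sub_smul, one_smul]; abel_nf
    _ ≤ (τ - 1) * ‖u‖ + ‖u - w‖ := by
      refine (norm_add_le _ _).trans_eq ?_
      rw [norm_smul_of_nonneg (by linarith)]
    _ < ‖τ • u‖ + ε := by rw [norm_smul_of_nonneg (by linarith)]; linarith

theorem exists_norming_frequently_norm_sub_lt {w : ℕ → X} {C : ℝ} (hw : WeakTendsto w 0)
    (hC : ∀ n, ‖w n‖ ≤ C) {ξ : X} {η ε : ℝ} (hη : 0 < η) (hηξ : η < ‖ξ‖) (hε : 0 < ε) :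
    ∃ u : X, 0 < ‖u‖ ∧ ∃ g : StrongDual ℝ X, ‖g‖ ≤ 1 ∧ g u = ‖u‖ ∧ ‖ξ‖ - η ≤ g ξ ∧
      ∃ᶠ n in atTop, ‖u - w n‖ < ‖u‖ + ε := by
  have hC0 : 0 ≤ C := (norm_nonneg _).trans (hC 0)
  -- for large `ρ`, a functional norming `ρ • ξ - z` nearly norms `ξ`
  set ρ := (2 * C + 1) / η
  have hρ : 0 < ρ := by positivity
  have hρη : ρ * η = 2 * C + 1 := div_mul_cancel₀ _ hη.ne'
  obtain ⟨z, hz, τ, ⟨hτ, -⟩, hfreq⟩ := exists_frequently_norm_sub_smul_lt hw hC (ρ • ξ) hε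
  rw [mem_closedBall_zero_iff] at hz
  obtain ⟨g, hg1, hg⟩ := exists_dual_vector'' ℝ (ρ • ξ - z)
  replace hg : g (ρ • ξ - z) = ‖ρ • ξ - z‖ := hg
  have hgz : |g z| ≤ ‖z‖ := by simpa using g.le_of_opNorm_le hg1 z
  have hfar : ρ * ‖ξ‖ - ‖z‖ ≤ ‖ρ • ξ - z‖ := by
    simpa only [norm_smul_of_nonneg hρ.le] using norm_sub_norm_le (ρ • ξ) z
  have hηξ' : ρ * η < ρ * ‖ξ‖ := mul_lt_mul_of_pos_left hηξ hρ
  refine ⟨τ⁻¹ • (ρ • ξ - z), ?_, g, hg1, ?_, ?_, hfreq.mono fun n hn => ?_⟩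
  · rw [norm_smul_of_nonneg (inv_nonneg.2 hτ.le)]
    exact mul_pos (inv_pos.2 hτ) (by linarith)
  · rw [map_smul, smul_eq_mul, norm_smul_of_nonneg (inv_nonneg.2 hτ.le)]
    exact congrArg _ hg
  · have hgξ : ρ * g ξ = g (ρ • ξ - z) + g z := by
      rw [← map_add, sub_add_cancel, map_smul, smul_eq_mul]
    have : ρ * (‖ξ‖ - η) ≤ ρ * g ξ := by linarith [neg_abs_le (g z)]
    exact le_of_mul_le_mul_left this hρ
  · have hsplit : τ⁻¹ • (ρ • ξ - z) - w n = τ⁻¹ • (ρ • ξ - z - τ • w n) := by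
      rw [smul_sub _ (ρ • ξ - z), smul_smul, inv_mul_cancel₀ hτ.ne', one_smul]
    rw [hsplit, norm_smul_of_nonneg (inv_nonneg.2 hτ.le),
      norm_smul_of_nonneg (inv_nonneg.2 hτ.le)]
    calc τ⁻¹ * ‖ρ • ξ - z - τ • w n‖ < τ⁻¹ * (‖ρ • ξ - z‖ + τ * ε) :=
          mul_lt_mul_of_pos_left hn (inv_pos.2 hτ)
      _ = τ⁻¹ * ‖ρ • ξ - z‖ + ε := by field_simp

theorem exists_mem_frequently_norm_sub_lt_natCast {S : Set X} (hS : Dense S) {v : ℕ → X}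
    {x c : X} {r : ℝ} (hv : WeakTendsto v x) (hr : 0 ≤ r) (hrx : r < ‖x - c‖) :
    ∃ s ∈ S, ∃ m : ℕ, r + m ≤ ‖s - c‖ ∧ ∃ᶠ n in atTop, ‖v n - s‖ < m := by
  set γ := ‖x - c‖ - r
  have hγ : 0 < γ := sub_pos.2 hrx
  have hw : WeakTendsto (fun n => v n - x) 0 := by simpa using hv.sub_const x
  obtain ⟨C, hC⟩ := hw.exists_norm_le
  obtain ⟨u, hu, g, hg1, hgu, hgξ, hfreq⟩ := exists_norming_frequently_norm_sub_lt hw hC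
    (ξ := x - c) (η := γ / 4) (ε := γ / 4) (by positivity) (by linarith) (by positivity)
  -- rescale `u` so that `‖u'‖ + γ / 2` is an integer
  set m := ⌈‖u‖ + γ / 2⌉₊
  set τ := (m - γ / 2) / ‖u‖
  have hτ : 1 ≤ τ := by rw [le_div_iff₀ hu]; linarith [Nat.le_ceil (‖u‖ + γ / 2)]
  set u' := τ • u
  have hu' : ‖u'‖ = m - γ / 2 := by
    rw [norm_smul_of_nonneg (by linarith), div_mul_cancel₀ _ hu.ne']
  have hgu' : g u' = ‖u'‖ := by
    rw [map_smul, hgu, smul_eq_mul, norm_smul_of_nonneg (by linarith)]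
  obtain ⟨s, hsS, hs⟩ := hS.exists_dist_lt (x + u') (by positivity : 0 < γ / 8)
  rw [dist_eq_norm] at hs
  refine ⟨s, hsS, m, ?_, hfreq.mono fun n hn => ?_⟩
  · have hg : g (u' + (x - c)) ≤ ‖u' + (x - c)‖ := by
      simpa using (le_abs_self _).trans (g.le_of_opNorm_le hg1 (u' + (x - c)))
    have htri : ‖u' + (x - c)‖ ≤ ‖s - c‖ + ‖x + u' - s‖ :=
      calc ‖u' + (x - c)‖ = ‖(s - c) + (x + u' - s)‖ := by congr 1; abel
        _ ≤ _ := norm_add_le _ _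
    rw [map_add, hgu'] at hg
    linarith
  · have hn' := norm_smul_sub_lt_of_one_le hτ hn
    calc ‖v n - s‖ = ‖(x + u' - s) - (u' - (v n - x))‖ := by congr 1; abel
      _ ≤ ‖x + u' - s‖ + ‖u' - (v n - x)‖ := norm_sub_le _ _
      _ < m := by linarith

end

theorem stmt_13_general {X : Type*} [NormedAddCommGroup X] [NormedSpace ℝ X]
    (S : Set X) (hS : Dense S) (T : S → S) (hbij : Function.Bijective T)
    (hT : ∀ u v : S, ⌊‖(u : X) - (v : X)‖⌋ = ⌊‖(T u : X) - (T v : X)‖⌋)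
    (x_ : ℕ → S) (x x' : X)
    (hconv : ∀ f : X →L[ℝ] ℝ,
      Filter.Tendsto (fun n => f (x_ n : X)) Filter.atTop (nhds (f x)))
    (hconv' : ∀ f : X →L[ℝ] ℝ,
      Filter.Tendsto (fun n => f (T (x_ n) : X)) Filter.atTop (nhds (f x'))) :
    ∀ y : S, ∀ m : ℕ, ‖x - (y : X)‖ < (m : ℝ) → ‖x' - (T y : X)‖ ≤ (m : ℝ) := by
  intro y m hxy
  by_contra! hfar
  obtain ⟨s, hsS, k, hsk, hnear⟩ :=
    exists_mem_frequently_norm_sub_lt_natCast hS hconv' m.cast_nonneg hfar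
  obtain ⟨t, ht⟩ := hbij.2 ⟨s, hsS⟩
  have hxt : ‖x - t‖ ≤ k := by
    refine (WeakTendsto.sub_const hconv t).norm_le_of_frequently (hnear.mono fun n hn => ?_)
    have := Int.floor_lt.2 (show ‖(T (x_ n) : X) - T t‖ < ((k : ℤ) : ℝ) by simpa [ht] using hn)
    rw [← hT] at this
    exact_mod_cast (Int.floor_lt.1 this).le
  have hty : ((m + k : ℕ) : ℝ) ≤ ‖(t : X) - y‖ := by
    have := Int.le_floor.2 (show (((m + k : ℕ) : ℤ) : ℝ) ≤ ‖(T t : X) - T y‖ by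
      push_cast; rw [ht]; linarith)
    rw [← hT] at this
    exact_mod_cast Int.le_floor.1 this
  push_cast at hty
  linarith [norm_sub_le_norm_sub_add_norm_sub (t : X) x y, norm_sub_rev (t : X) x]

theorem stmt_13 {X : Type*} [NormedAddCommGroup X] [NormedSpace ℝ X] [CompleteSpace X]
    (hrefl : Function.Surjective (NormedSpace.inclusionInDoubleDual ℝ X))
    (S : Set X) (hS : Dense S) (T : S → S) (hbij : Function.Bijective T)
    (hT : ∀ u v : S, ⌊‖(u : X) - (v : X)‖⌋ = ⌊‖(T u : X) - (T v : X)‖⌋)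
    (x_ : ℕ → S) (x x' : X)
    (hconv : ∀ f : X →L[ℝ] ℝ,
      Filter.Tendsto (fun n => f (x_ n : X)) Filter.atTop (nhds (f x)))
    (hconv' : ∀ f : X →L[ℝ] ℝ,
      Filter.Tendsto (fun n => f (T (x_ n) : X)) Filter.atTop (nhds (f x'))) :
    ∀ y : S, ∀ m : ℕ, ‖x - (y : X)‖ < (m : ℝ) → ‖x' - (T y : X)‖ ≤ (m : ℝ) :=
  stmt_13_general S hS T hbij hT x_ x x' hconv hconv'
end

section
/- Let X be a Banach space of dimension at least 2 such that the extreme points of its closed unit ball are dense in the unit sphere. Then the additive subgroup Λ = { Σᵢ λᵢ xᵢ : λᵢ ∈ ℤ, xᵢ extreme points of the unit ball } is dense in X. If moreover X is strictly convex, then Λ = X. -/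
/-!
In dimension at least two the unit sphere is connected, so as `u` runs over it, `‖x - u‖`
takes every value between `|‖x‖ - 1|` and `‖x‖ + 1`; hence every vector of norm at most `2`
is a sum of two unit vectors, and every vector is `n • (u + v)` with `u`, `v` unit vectors.
So an additive subgroup containing the unit sphere is the whole space. If the extreme points
are dense in the sphere, this applies to the closure of `Λ`; if the space is strictly convex,
every unit vector is extreme and it applies to `Λ` itself.
-/

open Metric Set Pointwise

section

variable {X : Type*} [NormedAddCommGroup X] [NormedSpace ℝ X]

theorem closedBall_two_subset_sphere_add_sphere (hdim : 1 < Module.rank ℝ X) :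
    closedBall (0 : X) 2 ⊆ sphere (0 : X) 1 + sphere (0 : X) 1 := by
  intro x hx
  rw [mem_closedBall_zero_iff] at hx
  have hconn := isConnected_sphere hdim (0 : X) zero_le_one
  obtain ⟨w, hw, hxw⟩ : ∃ w ∈ sphere (0 : X) 1, x = ‖x‖ • w := by
    rcases eq_or_ne x 0 with rfl | hx0
    · obtain ⟨w, hw⟩ := hconn.nonempty
      exact ⟨w, hw, by simp⟩
    · refine ⟨‖x‖⁻¹ • x, ?_, ?_⟩
      · simp [norm_smul, norm_ne_zero_iff.2 hx0]
      · rw [smul_inv_smul₀ (norm_ne_zero_iff.2 hx0)]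
  have hdist (c : ℝ) : ‖x - c • w‖ = |‖x‖ - c| := by
    conv_lhs => rw [hxw, ← sub_smul, norm_smul, mem_sphere_zero_iff_norm.1 hw, mul_one]
    exact Real.norm_eq_abs _
  have hcont : ContinuousOn (fun u : X => ‖x - u‖) (sphere (0 : X) 1) := by fun_prop
  have hmem : (1 : ℝ) ∈ Icc ‖x - w‖ ‖x - -w‖ := by
    rw [← one_smul ℝ w, ← neg_smul, hdist, hdist, mem_Icc, abs_sub_le_iff]
    have := norm_nonneg x
    exact ⟨⟨by linarith, by linarith⟩, le_abs.2 (Or.inl (by linarith))⟩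
  obtain ⟨u, hu, hxu⟩ :=
    hconn.isPreconnected.intermediate_value hw (by simpa using hw) hcont hmem
  exact ⟨u, hu, x - u, by simpa using hxu, add_sub_cancel u x⟩

theorem AddSubgroup.eq_top_of_sphere_subset (hdim : 1 < Module.rank ℝ X) {G : AddSubgroup X}
    (hG : sphere (0 : X) 1 ⊆ G) : G = ⊤ := by
  refine (AddSubgroup.eq_top_iff' G).2 fun x => ?_
  obtain ⟨n, hn⟩ := exists_nat_gt (‖x‖ / 2)
  have hn₀ : (0 : ℝ) < n := lt_of_le_of_lt (by positivity) hn
  have hx : (n : ℝ)⁻¹ • x ∈ closedBall (0 : X) 2 := by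
    rw [mem_closedBall_zero_iff, norm_smul, norm_inv, RCLike.norm_natCast, inv_mul_le_iff₀ hn₀]
    linarith [div_lt_iff₀' (two_pos (α := ℝ)) |>.1 hn]
  obtain ⟨u, hu, v, hv, huv : u + v = _⟩ := closedBall_two_subset_sphere_add_sphere hdim hx
  have hx_eq : x = n • u + n • v := by
    rw [← nsmul_add, huv, ← Nat.cast_smul_eq_nsmul ℝ, smul_inv_smul₀ hn₀.ne']
  rw [hx_eq]
  exact G.add_mem (G.nsmul_mem (hG hu) n) (G.nsmul_mem (hG hv) n)

end

theorem stmt_17_general {X : Type*} [NormedAddCommGroup X] [NormedSpace ℝ X]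
    (hdim : 2 ≤ Module.rank ℝ X)
    (hext : Metric.sphere (0 : X) 1 ⊆
      closure ((Metric.closedBall (0 : X) 1).extremePoints ℝ)) :
    Dense ((AddSubgroup.closure ((Metric.closedBall (0 : X) 1).extremePoints ℝ) :
        AddSubgroup X) : Set X) ∧
      (StrictConvexSpace ℝ X →
        AddSubgroup.closure ((Metric.closedBall (0 : X) 1).extremePoints ℝ) = ⊤) := by
  have hdim' : 1 < Module.rank ℝ X := lt_of_lt_of_le (by norm_num) hdim
  set Λ := AddSubgroup.closure ((closedBall (0 : X) 1).extremePoints ℝ)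
  constructor
  · have hsphere : sphere (0 : X) 1 ⊆ Λ.topologicalClosure :=
      hext.trans (closure_mono AddSubgroup.subset_closure)
    rw [dense_iff_closure_eq, ← AddSubgroup.topologicalClosure_coe,
      AddSubgroup.eq_top_of_sphere_subset hdim' hsphere, AddSubgroup.coe_top]
  · intro _
    exact AddSubgroup.eq_top_of_sphere_subset hdim' <|
      (StrictConvexSpace.sphere_subset_extremePoints_closedBall 0 one_ne_zero).trans
        AddSubgroup.subset_closure

theorem stmt_17 {X : Type*} [NormedAddCommGroup X] [NormedSpace ℝ X] [CompleteSpace X]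
    (hdim : 2 ≤ Module.rank ℝ X)
    (hext : Metric.sphere (0 : X) 1 ⊆
      closure ((Metric.closedBall (0 : X) 1).extremePoints ℝ)) :
    Dense ((AddSubgroup.closure ((Metric.closedBall (0 : X) 1).extremePoints ℝ) :
        AddSubgroup X) : Set X) ∧
      (StrictConvexSpace ℝ X →
        AddSubgroup.closure ((Metric.closedBall (0 : X) 1).extremePoints ℝ) = ⊤) :=
  stmt_17_general hdim hext
end
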